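/- arXiv:math/0701535 — 8 statements merged into one kernel-verified Lean document; each statement's English description precedes it below -/
import Mathlib

section
/- Let (X, d, μ) be an mm-space with total measure m := μ(X). For any κ with 0 < κ < m/2, the Lévy radius satisfies LeRad(X; −κ) ≤ diam(X →Lip₁ ℝ, m − κ). -/
open MeasureTheory Metric Set
open scoped ENNReal

/-- The partial diameter `diam(ν, a)`: the infimum of the diameters of Borel subsets of
measure at least `a`. -/
noncomputable def partialDiam {Y : Type*} [MetricSpace Y] [MeasurableSpace Y]
    (ν : Measure Y) (a : ℝ) : ℝ≥0∞ :=
  ⨅ (s : Set Y) (_ : MeasurableSet s) (_ : ENNReal.ofReal a ≤ ν s), EMetric.diam s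

/-- The observable diameter `diam(X →Lip₁ Y, a)`: the supremum over all `1`-Lipschitz maps
`f : X → Y` of the partial diameter of the push-forward measure. -/
noncomputable def obsDiam (Y : Type*) [MetricSpace Y] [MeasurableSpace Y]
    {X : Type*} [MetricSpace X] [MeasurableSpace X] (μ : Measure X) (a : ℝ) : ℝ≥0∞ :=
  ⨆ (f : X → Y) (_ : LipschitzWith 1 f), partialDiam (μ.map f) a

/-- The set of pre-Lévy means of `f`: points `a` with `f₊μ(-∞,a] ≥ m/2` and `f₊μ[a,∞) ≥ m/2`. -/
def preLevyMeans {X : Type*} [MeasurableSpace X] (μ : Measure X) (f : X → ℝ) : Set ℝ :=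
  {a : ℝ | μ Set.univ / 2 ≤ (μ.map f) (Set.Iic a) ∧ μ Set.univ / 2 ≤ (μ.map f) (Set.Ici a)}

/-- The Lévy mean `m_f := (min A_f + max A_f) / 2`. -/
noncomputable def levyMean {X : Type*} [MeasurableSpace X] (μ : Measure X) (f : X → ℝ) : ℝ :=
  (sInf (preLevyMeans μ f) + sSup (preLevyMeans μ f)) / 2

/-- The Lévy radius `LeRad(X; -κ)`. -/
noncomputable def leRad {X : Type*} [MetricSpace X] [MeasurableSpace X]
    (μ : Measure X) (κ : ℝ) : ℝ :=
  sInf {ρ : ℝ | 0 < ρ ∧ ∀ f : X → ℝ, LipschitzWith 1 f →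
    μ {x | ρ ≤ |f x - levyMean μ f|} ≤ ENNReal.ofReal κ}

/-- The concentration function `α_X(r)`, where `A_{+r}` is the open `r`-thickening. -/
noncomputable def concFn {X : Type*} [MetricSpace X] [MeasurableSpace X]
    (μ : Measure X) (r : ℝ) : ℝ :=
  sSup {v : ℝ | ∃ A : Set X, MeasurableSet A ∧ μ Set.univ / 2 ≤ μ A ∧
    v = (μ (Metric.thickening r A)ᶜ).toReal}

/-- The distance between two subsets: `inf {dist a b | a ∈ A, b ∈ B}`. -/
noncomputable def setDist {X : Type*} [MetricSpace X] (A B : Set X) : ℝ :=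
  sInf {d : ℝ | ∃ a ∈ A, ∃ b ∈ B, d = dist a b}

/-- The separation distance `Sep(X; κ₀, κ₁)`. -/
noncomputable def sep2 {X : Type*} [MetricSpace X] [MeasurableSpace X] (μ : Measure X)
    (κ₀ κ₁ : ℝ) : ℝ :=
  sSup {v : ℝ | ∃ A B : Set X, MeasurableSet A ∧ MeasurableSet B ∧
    ENNReal.ofReal κ₀ ≤ μ A ∧ ENNReal.ofReal κ₁ ≤ μ B ∧ v = setDist A B}

/-- The support of a measure on a metric space: points all of whose balls have
positive measure. -/
def measureSupport {X : Type*} [MetricSpace X] [MeasurableSpace X] (μ : Measure X) : Set X :=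
  {x : X | ∀ r : ℝ, 0 < r → 0 < μ (Metric.ball x r)}

/-- `V_p(f) = (∬ d_Y(f(x), f(x'))^p dμ dμ)^{1/p}`. -/
noncomputable def lipVar {X Y : Type*} [MeasurableSpace X] [MetricSpace Y]
    (μ : Measure X) (f : X → Y) (p : ℝ) : ℝ≥0∞ :=
  (∫⁻ x, ∫⁻ x', edist (f x) (f x') ^ p ∂μ ∂μ) ^ (1 / p)


/-- Existence of a pre-Lévy mean (a median) for a finite nonzero measure on `ℝ`. -/
lemma exists_median (ν : Measure ℝ) [IsFiniteMeasure ν] (hν : ν Set.univ ≠ 0) :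
    ∃ t : ℝ, ν Set.univ / 2 ≤ ν (Set.Iic t) ∧ ν Set.univ / 2 ≤ ν (Set.Ici t) := by
  set c : ℝ≥0∞ := ν Set.univ / 2 with hc
  have hctop : ν Set.univ ≠ ∞ := measure_ne_top ν _
  have hclt : c < ν Set.univ := ENNReal.half_lt_self hν hctop
  set T : Set ℝ := {a : ℝ | c ≤ ν (Set.Iic a)} with hT
  have hTup : ∀ a ∈ T, ∀ b, a ≤ b → b ∈ T := fun a ha b hab =>
    le_trans ha (measure_mono (Set.Iic_subset_Iic.2 hab))
  have hTne : T.Nonempty := by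
    have h := tendsto_measure_Iic_atTop ν
    have h2 : ∀ᶠ x : ℝ in Filter.atTop, c ≤ ν (Set.Iic x) :=
      h.eventually_const_le hclt
    exact h2.exists
  have hTbd : BddBelow T := by
    by_cases hall : ∀ n : ℕ, c ≤ ν (Set.Iic (-(n : ℝ)))
    · exfalso
      have hIcap : (⋂ n : ℕ, Set.Iic (-(n : ℝ))) = (∅ : Set ℝ) := by
        ext y
        simp only [Set.mem_iInter, Set.mem_Iic, Set.mem_empty_iff_false, iff_false, not_forall,
          not_le]
        obtain ⟨n, hn⟩ := exists_nat_gt (-y)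
        exact ⟨n, by linarith⟩
      have htend : Filter.Tendsto (fun n : ℕ => ν (Set.Iic (-(n : ℝ)))) Filter.atTop
          (nhds (ν (⋂ n : ℕ, Set.Iic (-(n : ℝ))))) := by
        refine tendsto_measure_iInter_atTop (fun n => measurableSet_Iic.nullMeasurableSet)
          (fun n m hnm => Set.Iic_subset_Iic.2 (by exact_mod_cast neg_le_neg (Nat.cast_le.2 hnm)))
          ⟨0, measure_ne_top _ _⟩
      rw [hIcap, measure_empty] at htend
      have : c ≤ 0 := ge_of_tendsto' htend hall
      have : c = 0 := le_antisymm this zero_le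
      rw [hc] at this
      exact hν (by simpa [ENNReal.div_eq_zero_iff] using this)
    · push_neg at hall
      obtain ⟨n, hn⟩ := hall
      refine ⟨-(n : ℝ), fun a ha => ?_⟩
      by_contra hcon
      push_neg at hcon
      exact absurd (le_trans ha (measure_mono (Set.Iic_subset_Iic.2 hcon.le))) (not_le.2 hn)
  set t := sInf T with ht
  refine ⟨t, ?_, ?_⟩
  · -- right continuity
    have hmem : ∀ n : ℕ, (t + 1 / ((n : ℝ) + 1)) ∈ T := by
      intro n
      have hpos : (0 : ℝ) < 1 / ((n : ℝ) + 1) := by positivity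
      obtain ⟨a, haT, halt⟩ := (csInf_lt_iff hTbd hTne).1 (by linarith : sInf T < t + 1 / ((n : ℝ) + 1))
      exact hTup a haT _ halt.le
    have hIcap : (⋂ n : ℕ, Set.Iic (t + 1 / ((n : ℝ) + 1))) = Set.Iic t := by
      ext y
      simp only [Set.mem_iInter, Set.mem_Iic]
      constructor
      · intro hy
        by_contra hcon
        push_neg at hcon
        obtain ⟨n, hn⟩ := exists_nat_one_div_lt (by linarith : (0 : ℝ) < y - t)
        exact absurd (hy n) (by linarith)
      · intro hy n
        have : (0 : ℝ) < 1 / ((n : ℝ) + 1) := by positivity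
        linarith
    have htend : Filter.Tendsto (fun n : ℕ => ν (Set.Iic (t + 1 / ((n : ℝ) + 1)))) Filter.atTop
        (nhds (ν (⋂ n : ℕ, Set.Iic (t + 1 / ((n : ℝ) + 1))))) := by
      refine tendsto_measure_iInter_atTop (fun n => measurableSet_Iic.nullMeasurableSet)
        (fun n m hnm => Set.Iic_subset_Iic.2 ?_) ⟨0, measure_ne_top _ _⟩
      have : 1 / ((m : ℝ) + 1) ≤ 1 / ((n : ℝ) + 1) := by
        apply one_div_le_one_div_of_le (by positivity)
        exact_mod_cast by linarith [(Nat.cast_le (α := ℝ)).2 hnm]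
      linarith
    rw [hIcap] at htend
    exact ge_of_tendsto' htend hmem
  · -- left bound
    have hIio : ν (Set.Iio t) ≤ c := by
      have hun : (⋃ n : ℕ, Set.Iic (t - 1 / ((n : ℝ) + 1))) = Set.Iio t := by
        ext y
        simp only [Set.mem_iUnion, Set.mem_Iic, Set.mem_Iio]
        constructor
        · rintro ⟨n, hn⟩
          have : (0 : ℝ) < 1 / ((n : ℝ) + 1) := by positivity
          linarith
        · intro hy
          obtain ⟨n, hn⟩ := exists_nat_one_div_lt (by linarith : (0 : ℝ) < t - y)
          exact ⟨n, by linarith⟩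
      have hlt : ∀ n : ℕ, ν (Set.Iic (t - 1 / ((n : ℝ) + 1))) ≤ c := by
        intro n
        have hpos : (0 : ℝ) < 1 / ((n : ℝ) + 1) := by positivity
        have hnot : t - 1 / ((n : ℝ) + 1) ∉ T := fun hmem =>
          absurd (csInf_le hTbd hmem) (by push_neg; linarith)
        exact (not_le.1 hnot).le
      have htend : Filter.Tendsto (fun n : ℕ => ν (Set.Iic (t - 1 / ((n : ℝ) + 1)))) Filter.atTop
          (nhds (ν (⋃ n : ℕ, Set.Iic (t - 1 / ((n : ℝ) + 1))))) := by
        refine tendsto_measure_iUnion_atTop (fun n m hnm => Set.Iic_subset_Iic.2 ?_)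
        have : 1 / ((m : ℝ) + 1) ≤ 1 / ((n : ℝ) + 1) := by
          apply one_div_le_one_div_of_le (by positivity)
          exact_mod_cast by linarith [(Nat.cast_le (α := ℝ)).2 hnm]
        linarith
      rw [hun] at htend
      exact le_of_tendsto' htend hlt
    have : ν (Set.Ici t) = ν Set.univ - ν (Set.Iio t) := by
      rw [← Set.compl_Iio]
      exact measure_compl measurableSet_Iio (measure_ne_top _ _)
    rw [this]
    calc c = ν Set.univ - c := (ENNReal.sub_half hctop).symm
      _ ≤ ν Set.univ - ν (Set.Iio t) := tsub_le_tsub_left hIio _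

/-- For `0 < κ < m/2`, `LeRad(X; -κ) ≤ diam(X →Lip₁ ℝ, m - κ)`. -/
theorem leRad_le_obsDiam {X : Type*} [MetricSpace X] [CompleteSpace X]
    [TopologicalSpace.SeparableSpace X] [MeasurableSpace X] [BorelSpace X]
    (μ : Measure X) [IsFiniteMeasure μ]
    (κ : ℝ) (h0 : 0 < κ) (h1 : κ < (μ Set.univ).toReal / 2) :
    ENNReal.ofReal (leRad μ κ) ≤ obsDiam ℝ μ ((μ Set.univ).toReal - κ) := by
  set m' : ℝ≥0∞ := μ Set.univ with hm'def
  set m : ℝ := m'.toReal with hmdef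
  have hm'top : m' ≠ ∞ := measure_ne_top μ _
  have hmpos : 0 < m := by linarith
  have hm'or : m' = ENNReal.ofReal m := (ENNReal.ofReal_toReal hm'top).symm
  set D := obsDiam ℝ μ (m - κ) with hDdef
  by_cases hD : D = ∞
  · rw [hD]; exact le_top
  suffices h : leRad μ κ ≤ D.toReal by
    calc ENNReal.ofReal (leRad μ κ) ≤ ENNReal.ofReal D.toReal := ENNReal.ofReal_le_ofReal h
      _ = D := ENNReal.ofReal_toReal hD
  have key : ∀ ε : ℝ, 0 < ε → leRad μ κ ≤ D.toReal + ε := by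
    intro ε hε
    set ρ := D.toReal + ε with hρdef
    have hρpos : 0 < ρ := by positivity
    have hmem : ρ ∈ {ρ : ℝ | 0 < ρ ∧ ∀ f : X → ℝ, LipschitzWith 1 f →
        μ {x | ρ ≤ |f x - levyMean μ f|} ≤ ENNReal.ofReal κ} := by
      refine ⟨hρpos, fun f hL => ?_⟩
      have hf : Measurable f := hL.continuous.measurable
      set ν := μ.map f with hνdef
      haveI : IsFiniteMeasure ν := Measure.isFiniteMeasure_map μ f
      have hνuniv : ν Set.univ = m' := by
        rw [hνdef, Measure.map_apply hf MeasurableSet.univ, Set.preimage_univ]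
      -- find a good set s
      have hpd : partialDiam ν (m - κ) < ENNReal.ofReal ρ := by
        have hle : partialDiam ν (m - κ) ≤ D := by
          rw [hDdef]
          exact le_iSup₂ (f := fun (g : X → ℝ) (_ : LipschitzWith 1 g) =>
            partialDiam (μ.map g) (m - κ)) f hL
        refine lt_of_le_of_lt hle ?_
        rw [ENNReal.lt_ofReal_iff_toReal_lt hD]
        linarith
      rw [partialDiam] at hpd
      simp only [iInf_lt_iff] at hpd
      obtain ⟨s, hsm, hs, hdiam⟩ := hpd
      have hdtop : EMetric.diam s ≠ ∞ := hdiam.ne_top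
      set D' : ℝ := (EMetric.diam s).toReal with hD'def
      have hD'ρ : D' < ρ := ENNReal.toReal_lt_of_lt_ofReal hdiam
      have hD'0 : 0 ≤ D' := ENNReal.toReal_nonneg
      -- s is nonempty
      have hsne : s.Nonempty := by
        rw [Set.nonempty_iff_ne_empty]
        rintro rfl
        rw [measure_empty] at hs
        exact absurd hs (not_le.2 (ENNReal.ofReal_pos.2 (by linarith)))
      -- half-measure comparison
      have hhalf : m' / 2 < ENNReal.ofReal (m - κ) := by
        have h2 : ENNReal.ofReal m / 2 = ENNReal.ofReal (m / 2) := by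
          rw [ENNReal.ofReal_div_of_pos (by norm_num : (0:ℝ) < 2)]
          norm_num
        rw [hm'or, h2]
        exact (ENNReal.ofReal_lt_ofReal_iff (by linarith)).2 (by linarith)
      -- any pre-Lévy mean is within D' of any point of s
      have hbound : ∀ a ∈ preLevyMeans μ f, ∀ y ∈ s, |y - a| ≤ D' := by
        rintro a ⟨ha1, ha2⟩ y hy
        have hinter : ∀ T : Set ℝ, MeasurableSet T → m' / 2 ≤ ν T → (s ∩ T).Nonempty := by
          intro T hTm hT
          rw [Set.nonempty_iff_ne_empty]
          intro hE
          have h1 : ν (s ∪ T) + ν (s ∩ T) = ν s + ν T := measure_union_add_inter s hTm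
          rw [hE, measure_empty, add_zero] at h1
          have h2 : ν (s ∪ T) ≤ m' := hνuniv ▸ measure_mono (Set.subset_univ _)
          have h3 : m' < ν s + ν T := by
            calc m' = m' / 2 + m' / 2 := (ENNReal.add_halves m').symm
              _ < ENNReal.ofReal (m - κ) + m' / 2 :=
                  ENNReal.add_lt_add_right (ENNReal.div_lt_top hm'top (by norm_num)).ne hhalf
              _ ≤ ν s + ν T := add_le_add hs hT
          rw [← h1] at h3
          exact absurd h2 (not_le.2 h3)
        obtain ⟨y₁, hy₁s, hy₁⟩ := hinter (Set.Iic a) measurableSet_Iic ha1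
        obtain ⟨y₂, hy₂s, hy₂⟩ := hinter (Set.Ici a) measurableSet_Ici ha2
        simp only [Set.mem_Iic] at hy₁
        simp only [Set.mem_Ici] at hy₂
        have hd1 : dist y y₁ ≤ D' := by
          rw [dist_edist]
          exact ENNReal.toReal_mono hdtop (EMetric.edist_le_diam_of_mem hy hy₁s)
        have hd2 : dist y y₂ ≤ D' := by
          rw [dist_edist]
          exact ENNReal.toReal_mono hdtop (EMetric.edist_le_diam_of_mem hy hy₂s)
        rw [Real.dist_eq] at hd1 hd2
        rcases le_total y a with h | h
        · have h5 : y₂ - y ≤ |y - y₂| := by rw [abs_sub_comm]; exact le_abs_self _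
          rw [abs_of_nonpos (by linarith)]
          linarith
        · have h5 : y - y₁ ≤ |y - y₁| := le_abs_self _
          rw [abs_of_nonneg (by linarith)]
          linarith
      -- existence of a pre-Lévy mean
      have hν0 : ν Set.univ ≠ 0 := by
        rw [hνuniv, hm'or]
        exact (ENNReal.ofReal_pos.2 hmpos).ne'
      obtain ⟨t, ht1, ht2⟩ := exists_median ν hν0
      rw [hνuniv] at ht1 ht2
      have htA : t ∈ preLevyMeans μ f := ⟨ht1, ht2⟩
      have hAne : (preLevyMeans μ f).Nonempty := ⟨t, htA⟩
      obtain ⟨y₀, hy₀⟩ := hsne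
      have hbdd_above : BddAbove (preLevyMeans μ f) := by
        refine ⟨y₀ + D', fun a ha => ?_⟩
        have := abs_le.1 (hbound a ha y₀ hy₀)
        linarith [this.1]
      have hbdd_below : BddBelow (preLevyMeans μ f) := by
        refine ⟨y₀ - D', fun a ha => ?_⟩
        have := abs_le.1 (hbound a ha y₀ hy₀)
        linarith [this.2]
      -- every point of s is within D' of the Lévy mean
      have hmean : ∀ y ∈ s, |y - levyMean μ f| ≤ D' := by
        intro y hy
        have hb := fun a ha => abs_le.1 (hbound a ha y hy)
        have hi1 : y - D' ≤ sInf (preLevyMeans μ f) :=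
          le_csInf hAne fun a ha => by linarith [(hb a ha).2]
        have hi2 : sInf (preLevyMeans μ f) ≤ y + D' :=
          csInf_le_of_le hbdd_below htA (by linarith [(hb t htA).1])
        have hs1 : y - D' ≤ sSup (preLevyMeans μ f) :=
          le_csSup_of_le hbdd_above htA (by linarith [(hb t htA).2])
        have hs2 : sSup (preLevyMeans μ f) ≤ y + D' :=
          csSup_le hAne fun a ha => by linarith [(hb a ha).1]
        rw [levyMean, abs_le]
        constructor <;> [linarith; linarith]
      -- final measure estimate
      have hsub : {x | ρ ≤ |f x - levyMean μ f|} ⊆ (f ⁻¹' s)ᶜ := by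
        intro x hx hxs
        have := hmean (f x) hxs
        simp only [Set.mem_setOf_eq] at hx
        linarith
      have hνs : ENNReal.ofReal (m - κ) ≤ μ (f ⁻¹' s) := by
        rwa [hνdef, Measure.map_apply hf hsm] at hs
      calc μ {x | ρ ≤ |f x - levyMean μ f|} ≤ μ (f ⁻¹' s)ᶜ := measure_mono hsub
        _ = m' - μ (f ⁻¹' s) := measure_compl (hf hsm) (measure_ne_top _ _)
        _ ≤ m' - ENNReal.ofReal (m - κ) := tsub_le_tsub_left hνs _
        _ = ENNReal.ofReal κ := by
            rw [hm'or, ← ENNReal.ofReal_sub _ (by linarith : (0:ℝ) ≤ m - κ)]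
            norm_num
    have hbd : BddBelow {ρ : ℝ | 0 < ρ ∧ ∀ f : X → ℝ, LipschitzWith 1 f →
        μ {x | ρ ≤ |f x - levyMean μ f|} ≤ ENNReal.ofReal κ} :=
      ⟨0, fun x hx => hx.1.le⟩
    exact csInf_le hbd hmem
  exact le_of_forall_pos_le_add key
end

section
/- Let (X, d, μ) be an mm-space such that the support of μ is connected, and let m := μ(X). Then, for any r > 0 with α_X(r) > 0, the separation distance satisfies Sep(X; m/2, α_X(r)) ≤ r. -/
open MeasureTheory Metric Set
open scoped ENNReal

/-! Suppose `A`, `B` realize `Sep(X; m/2, α_X(r)) > r` and put `D := d(A, B)`. For `r < t ≤ D`,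
the set `A_{+(t-r)}` still has measure `≥ m/2` and its `r`-thickening lies in `A_{+t}`, so
`α_X(r) ≥ μ(X \ A_{+t}) ≥ μ(X \ A_{+D}) ≥ μ(B) ≥ α_X(r)`. Hence the shell `{t ≤ d(·, A) < D}` is
`μ`-null. On the other hand `d(·, A)` maps the connected support onto an interval containing `0`
(a point of `A`) and a value `≥ D` (a point of `B`), so the support meets the open shell
`{t < d(·, A) < D}`, which must then have positive measure. -/

section SetDist

variable {X : Type*} [MetricSpace X] {A B : Set X}

theorem setDist_le_dist {a b : X} (ha : a ∈ A) (hb : b ∈ B) : setDist A B ≤ dist a b :=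
  csInf_le ⟨0, by rintro _ ⟨a, -, b, -, rfl⟩; exact dist_nonneg⟩ ⟨a, ha, b, hb, rfl⟩

theorem setDist_le_infDist {b : X} (hA : A.Nonempty) (hb : b ∈ B) :
    setDist A B ≤ infDist b A :=
  (le_infDist hA).2 fun _ ha => (setDist_le_dist ha hb).trans_eq (dist_comm _ _)

theorem subset_compl_thickening_setDist : B ⊆ (thickening (setDist A B) A)ᶜ := by
  intro b hb hbA
  obtain ⟨a, ha, hba⟩ := mem_thickening_iff.1 hbA
  exact (setDist_le_dist ha hb).not_gt (by rwa [dist_comm])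

end SetDist

theorem IsPreconnected.exists_infDist_eq {X : Type*} [PseudoMetricSpace X] {S A : Set X}
    (hS : IsPreconnected S) {a b : X} (ha : a ∈ S ∩ A) (hb : b ∈ S) {s : ℝ} (hs : 0 ≤ s)
    (hsb : s ≤ infDist b A) : ∃ x ∈ S, infDist x A = s :=
  hS.intermediate_value ha.1 hb (continuous_infDist_pt A).continuousOn
    ⟨by rwa [infDist_zero_of_mem ha.2], hsb⟩

theorem measureSupport_eq_support {X : Type*} [MetricSpace X] [MeasurableSpace X]
    (μ : Measure X) : measureSupport μ = μ.support := by
  ext x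
  exact nhds_basis_ball.mem_measureSupport.symm

section Concentration

variable {X : Type*} [MetricSpace X] [MeasurableSpace X] {μ : Measure X} [IsFiniteMeasure μ]
  {A B : Set X} {r t : ℝ}

theorem measure_compl_thickening_le_concFn (hAm : MeasurableSet A) (hA : μ univ / 2 ≤ μ A) :
    μ (thickening r A)ᶜ ≤ ENNReal.ofReal (concFn μ r) := by
  have hbdd : BddAbove {v : ℝ | ∃ A : Set X, MeasurableSet A ∧ μ univ / 2 ≤ μ A ∧
      v = (μ (thickening r A)ᶜ).toReal} := by
    refine ⟨(μ univ).toReal, ?_⟩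
    rintro _ ⟨A, -, -, rfl⟩
    exact ENNReal.toReal_mono (measure_ne_top μ _) (measure_mono (subset_univ _))
  rw [← ENNReal.ofReal_toReal (measure_ne_top μ _)]
  exact ENNReal.ofReal_le_ofReal (le_csSup hbdd ⟨A, hAm, hA, rfl⟩)

variable [OpensMeasurableSpace X]

theorem measure_compl_thickening_le_concFn_of_lt (hA : μ univ / 2 ≤ μ A) (hrt : r < t) :
    μ (thickening t A)ᶜ ≤ ENNReal.ofReal (concFn μ r) := by
  have hsub : thickening r (thickening (t - r) A) ⊆ thickening t A := by
    simpa using thickening_thickening_subset r (t - r) A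
  calc μ (thickening t A)ᶜ ≤ μ (thickening r (thickening (t - r) A))ᶜ :=
        measure_mono (compl_subset_compl.2 hsub)
    _ ≤ ENNReal.ofReal (concFn μ r) :=
        measure_compl_thickening_le_concFn isOpen_thickening.measurableSet
          (hA.trans (measure_mono (self_subset_thickening (sub_pos.2 hrt) A)))

theorem measure_compl_thickening_diff_compl_thickening_setDist_eq_zero
    (hA : μ univ / 2 ≤ μ A) (hB : ENNReal.ofReal (concFn μ r) ≤ μ B) (hrt : r < t)
    (htD : t ≤ setDist A B) :
    μ ((thickening t A)ᶜ \ (thickening (setDist A B) A)ᶜ) = 0 := by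
  rw [measure_sdiff (compl_subset_compl.2 (thickening_mono htD A))
    isOpen_thickening.measurableSet.compl.nullMeasurableSet (measure_ne_top μ _)]
  exact tsub_eq_zero_of_le <| (measure_compl_thickening_le_concFn_of_lt hA hrt).trans <|
    hB.trans (measure_mono subset_compl_thickening_setDist)

end Concentration

theorem sep_le_of_connected_support_general {X : Type*} [MetricSpace X]
    [TopologicalSpace.SeparableSpace X] [MeasurableSpace X] [BorelSpace X]
    (μ : Measure X) [IsFiniteMeasure μ]
    (hconn : IsConnected (measureSupport μ))
    (r : ℝ) (hr : 0 < r) (hα : 0 < concFn μ r) :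
    sep2 μ ((μ Set.univ).toReal / 2) (concFn μ r) ≤ r := by
  rw [measureSupport_eq_support] at hconn
  have hhalf : ENNReal.ofReal ((μ univ).toReal / 2) = μ univ / 2 := by
    rw [ENNReal.ofReal_div_of_pos two_pos, ENNReal.ofReal_toReal (measure_ne_top μ _),
      ENNReal.ofReal_ofNat]
  refine Real.sSup_le ?_ hr.le
  rintro _ ⟨A, B, -, -, hA, hB, rfl⟩
  rw [hhalf] at hA
  by_contra! hrD
  set D := setDist A B
  have hB0 : 0 < μ B := (ENNReal.ofReal_pos.2 hα).trans_le hB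
  have hA0 : 0 < μ A :=
    (ENNReal.half_pos (hB0.trans_le (measure_mono (subset_univ B))).ne').trans_le hA
  obtain ⟨a, haA, ha⟩ := Measure.nonempty_inter_support_of_pos hA0
  obtain ⟨b, hbB, hb⟩ := Measure.nonempty_inter_support_of_pos hB0
  set t := (r + D) / 2 with ht
  obtain ⟨x, hx, hxA⟩ := hconn.isPreconnected.exists_infDist_eq ⟨ha, haA⟩ hb
    (s := (t + D) / 2) (by linarith)
    ((by linarith : (t + D) / 2 ≤ D).trans (setDist_le_infDist ⟨a, haA⟩ hbB))
  set U := {y | t < infDist y A ∧ infDist y A < D}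
  have hU : IsOpen U := (isOpen_lt continuous_const (continuous_infDist_pt A)).inter
    (isOpen_lt (continuous_infDist_pt A) continuous_const)
  have hU_null : μ U = 0 := by
    refine measure_mono_null ?_ (measure_compl_thickening_diff_compl_thickening_setDist_eq_zero
      (t := t) hA hB (by linarith) (by linarith))
    rintro y ⟨hty, hyD⟩
    simp only [mem_sdiff, mem_compl_iff, not_not, mem_thickening_iff_infDist_lt ⟨a, haA⟩]
    exact ⟨hty.not_gt, hyD⟩
  have hU_pos : 0 < μ U :=
    (Measure.mem_support_iff_forall x).1 hx U (hU.mem_nhds ⟨by linarith, by linarith⟩)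
  exact hU_pos.ne' hU_null

/-- If the support of `μ` is connected, then for `r > 0` with `α_X(r) > 0`
one has `Sep(X; m/2, α_X(r)) ≤ r`. -/
theorem sep_le_of_connected_support {X : Type*} [MetricSpace X] [CompleteSpace X]
    [TopologicalSpace.SeparableSpace X] [MeasurableSpace X] [BorelSpace X]
    (μ : Measure X) [IsFiniteMeasure μ]
    (hconn : IsConnected (measureSupport μ))
    (r : ℝ) (hr : 0 < r) (hα : 0 < concFn μ r) :
    sep2 μ ((μ Set.univ).toReal / 2) (concFn μ r) ≤ r :=
  sep_le_of_connected_support_general μ hconn r hr hα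
end

section
/- Let (X, d, μ) be an mm-space with total measure m := μ(X). For any r > 0, there exists a Borel subset X₀ ⊆ X such that μ(X \ (X₀)_{+r}) = α_X(r) and μ(X₀) ≥ m/2. -/
open MeasureTheory Metric Set
open scoped ENNReal

/-!
Take admissible sets `A n` (measurable, of measure `≥ m/2`) with
`μ (X \ (A n)_{+r}) → α_X(r)`. In a second countable space a subsequence converges in the sense of
Kuratowski. Its upper limit `X₀` is closed and contains the set-theoretic `limsup`, so
`μ X₀ ≥ m/2`; being also the lower limit, `X₀` has its `r`-thickening inside the `liminf` of the
thickenings, whence `μ (X \ X₀_{+r}) ≥ limsup μ (X \ (A n)_{+r}) = α_X(r)`.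
-/

open Filter Topology TopologicalSpace

section Kuratowski

variable {X : Type*} [TopologicalSpace X]

def kuratowskiLimsup (B : ℕ → Set X) : Set X :=
  {a | ∀ U ∈ 𝓝 a, ∃ᶠ j in atTop, (B j ∩ U).Nonempty}

def kuratowskiLiminf (B : ℕ → Set X) : Set X :=
  {a | ∀ U ∈ 𝓝 a, ∀ᶠ j in atTop, (B j ∩ U).Nonempty}

theorem isClosed_kuratowskiLimsup (B : ℕ → Set X) : IsClosed (kuratowskiLimsup B) := by
  refine isClosed_of_closure_subset fun a ha U hU => ?_
  obtain ⟨V, hVU, hVo, haV⟩ := mem_nhds_iff.1 hU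
  obtain ⟨b, hbV, hb⟩ := mem_closure_iff.1 ha V hVo haV
  exact (hb V (hVo.mem_nhds hbV)).mono fun _ ⟨x, hxB, hxV⟩ => ⟨x, hxB, hVU hxV⟩

theorem limsup_subset_kuratowskiLimsup (B : ℕ → Set X) :
    limsup B atTop ⊆ kuratowskiLimsup B := fun a ha _ hU =>
  (mem_limsup_iff_frequently_mem.1 ha).mono fun _ hj => ⟨a, hj, mem_of_mem_nhds hU⟩

/- A set is recorded by the basic open sets it meets; a convergent subsequence in the Cantor
space of such records makes the record of each basic set eventually constant. -/
theorem exists_subseq_kuratowskiLimsup_subset_kuratowskiLiminf [SecondCountableTopology X]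
    (B : ℕ → Set X) :
    ∃ φ : ℕ → ℕ, StrictMono φ ∧ kuratowskiLimsup (B ∘ φ) ⊆ kuratowskiLiminf (B ∘ φ) := by
  classical
  obtain ⟨𝓑, h𝓑c, -, h𝓑⟩ := exists_countable_basis X
  have := h𝓑c.to_subtype
  let meets : ℕ → 𝓑 → Bool := fun n V => decide (B n ∩ V).Nonempty
  obtain ⟨L, -, φ, hφ, hL⟩ := isCompact_univ.tendsto_subseq (x := meets) fun _ => mem_univ _
  have hstable : ∀ V, ∀ᶠ j in atTop, meets (φ j) V = L V := fun V => by
    simpa only [nhds_discrete, tendsto_pure, Function.comp_apply] using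
      ((continuous_apply V).tendsto L).comp hL
  refine ⟨φ, hφ, fun a ha U hU => ?_⟩
  obtain ⟨V, hV𝓑, haV, hVU⟩ := h𝓑.mem_nhds_iff.1 hU
  have hLV : L ⟨V, hV𝓑⟩ = true := by
    obtain ⟨j, hmeet, hj⟩ :=
      ((ha V (h𝓑.mem_nhds hV𝓑 haV)).and_eventually (hstable ⟨V, hV𝓑⟩)).exists
    exact hj ▸ decide_eq_true hmeet
  filter_upwards [hstable ⟨V, hV𝓑⟩] with j hj
  obtain ⟨x, hxB, hxV⟩ := of_decide_eq_true (hj.trans hLV)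
  exact ⟨x, hxB, hVU hxV⟩

end Kuratowski

theorem thickening_kuratowskiLiminf_subset_liminf {X : Type*} [PseudoMetricSpace X]
    (B : ℕ → Set X) (r : ℝ) :
    thickening r (kuratowskiLiminf B) ⊆ liminf (fun j => thickening r (B j)) atTop := by
  intro x hx
  obtain ⟨a, ha, hxa⟩ := mem_thickening_iff.1 hx
  rw [mem_liminf_iff_eventually_mem]
  filter_upwards [ha _ (ball_mem_nhds a (sub_pos.2 hxa))] with j ⟨b, hbB, hba⟩
  refine mem_thickening_iff.2 ⟨b, hbB, ?_⟩
  linarith [dist_triangle x a b, dist_comm a b, mem_ball.1 hba]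

theorem limsup_measure_le_measure_limsup {α : Type*} [MeasurableSpace α] (μ : Measure α)
    [IsFiniteMeasure μ] {s : ℕ → Set α} (hs : ∀ n, MeasurableSet (s n)) :
    limsup (fun n => μ (s n)) atTop ≤ μ (limsup s atTop) := by
  have htail : Antitone fun n => ⋃ i ≥ n, s i := fun m n hmn =>
    biUnion_subset_biUnion_left fun i hi => le_trans hmn hi
  rw [limsup_eq_iInf_iSup_of_nat, limsup_eq_iInf_iSup_of_nat]
  simp only [iSup_eq_iUnion, iInf_eq_iInter]
  rw [htail.measure_iInter (fun n => (MeasurableSet.biUnion (to_countable _) fun i _ => hs i)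
    |>.nullMeasurableSet) ⟨0, measure_ne_top μ _⟩]
  exact iInf_mono fun n => iSup₂_le fun i hi => measure_mono (subset_biUnion_of_mem hi)

section ConcFn

variable {X : Type*} [MetricSpace X] [MeasurableSpace X] (μ : Measure X) [IsFiniteMeasure μ]
  (r : ℝ)

theorem bddAbove_concFn_set : BddAbove {v : ℝ | ∃ A : Set X, MeasurableSet A ∧
    μ univ / 2 ≤ μ A ∧ v = (μ (thickening r A)ᶜ).toReal} := by
  refine ⟨(μ univ).toReal, ?_⟩
  rintro _ ⟨A, -, -, rfl⟩
  exact ENNReal.toReal_mono (measure_ne_top μ _) (measure_mono (subset_univ _))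

theorem le_concFn {A : Set X} (hA : MeasurableSet A) (hAμ : μ univ / 2 ≤ μ A) :
    (μ (thickening r A)ᶜ).toReal ≤ concFn μ r :=
  le_csSup (bddAbove_concFn_set μ r) ⟨A, hA, hAμ, rfl⟩

theorem exists_seq_tendsto_concFn : ∃ A : ℕ → Set X, (∀ n, MeasurableSet (A n)) ∧
    (∀ n, μ univ / 2 ≤ μ (A n)) ∧
    Tendsto (fun n => μ (thickening r (A n))ᶜ) atTop (𝓝 (ENNReal.ofReal (concFn μ r))) := by
  obtain ⟨v, -, hv, hvS⟩ := exists_seq_tendsto_sSup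
    (by exact ⟨_, univ, MeasurableSet.univ, ENNReal.half_le_self, rfl⟩) (bddAbove_concFn_set μ r)
  choose A hAm hAμ hvA using hvS
  refine ⟨A, hAm, hAμ, ?_⟩
  have hAv : (fun n => μ (thickening r (A n))ᶜ) = fun n => ENNReal.ofReal (v n) := by
    ext n
    rw [hvA n, ENNReal.ofReal_toReal (measure_ne_top μ _)]
  rw [hAv]
  exact ENNReal.tendsto_ofReal hv

end ConcFn

theorem exists_set_realizing_concFn_general {X : Type*} [MetricSpace X]
    [TopologicalSpace.SeparableSpace X] [MeasurableSpace X] [BorelSpace X]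
    (μ : Measure X) [IsFiniteMeasure μ]
    (r : ℝ) :
    ∃ X₀ : Set X, MeasurableSet X₀ ∧ μ Set.univ / 2 ≤ μ X₀ ∧
      (μ (Metric.thickening r X₀)ᶜ).toReal = concFn μ r := by
  obtain ⟨A, hAm, hAμ, hA⟩ := exists_seq_tendsto_concFn μ r
  obtain ⟨φ, hφ, hconv⟩ := exists_subseq_kuratowskiLimsup_subset_kuratowskiLiminf A
  set X₀ := kuratowskiLimsup (A ∘ φ)
  have hX₀m : MeasurableSet X₀ := (isClosed_kuratowskiLimsup _).measurableSet
  have hX₀μ : μ univ / 2 ≤ μ X₀ := calc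
    μ univ / 2 ≤ limsup (fun j => μ (A (φ j))) atTop :=
      le_limsup_of_frequently_le (Frequently.of_forall fun j => hAμ (φ j))
    _ ≤ μ (limsup (A ∘ φ) atTop) := limsup_measure_le_measure_limsup μ fun j => hAm (φ j)
    _ ≤ μ X₀ := measure_mono (limsup_subset_kuratowskiLimsup _)
  have hX₀thick : ENNReal.ofReal (concFn μ r) ≤ μ (thickening r X₀)ᶜ := calc
    ENNReal.ofReal (concFn μ r) = limsup (fun j => μ (thickening r (A (φ j)))ᶜ) atTop :=
      (hA.comp hφ.tendsto_atTop).limsup_eq.symm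
    _ ≤ μ (limsup (compl ∘ fun j => thickening r (A (φ j))) atTop) :=
      limsup_measure_le_measure_limsup μ fun j => isOpen_thickening.measurableSet.compl
    _ ≤ μ (thickening r X₀)ᶜ := by
      rw [← liminf_compl]
      exact measure_mono (compl_subset_compl.2 ((thickening_subset_of_subset r hconv).trans
        (thickening_kuratowskiLiminf_subset_liminf _ r)))
  exact ⟨X₀, hX₀m, hX₀μ, le_antisymm (le_concFn μ r hX₀m hX₀μ)
    ((ENNReal.ofReal_le_iff_le_toReal (measure_ne_top μ _)).1 hX₀thick)⟩

/-- For any `r > 0` there is a Borel set `X₀` with `μ(X₀) ≥ m/2` realizing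
the concentration function: `μ(X \ (X₀)_{+r}) = α_X(r)`. -/
theorem exists_set_realizing_concFn {X : Type*} [MetricSpace X] [CompleteSpace X]
    [TopologicalSpace.SeparableSpace X] [MeasurableSpace X] [BorelSpace X]
    (μ : Measure X) [IsFiniteMeasure μ]
    (r : ℝ) (hr : 0 < r) :
    ∃ X₀ : Set X, MeasurableSet X₀ ∧ μ Set.univ / 2 ≤ μ X₀ ∧
      (μ (Metric.thickening r X₀)ᶜ).toReal = concFn μ r :=
  exists_set_realizing_concFn_general μ r
end

section
/- Let (X, d_X, μ_X) be an mm-space with total measure m := μ_X(X) > 0, let (Y, d_Y) be a metric space, let κ > 0, let p ∈ (0, +∞), and let f : X → Y be a Borel measurable map. Then the partial diameter of the push-forward measure satisfies diam(f_*(μ_X), m − κ) ≤ (2/(κ m)^{1/p})·V_p(f). -/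
open MeasureTheory Metric Set
open scoped ENNReal

/-- `diam(f₊μ_X, m - κ) ≤ (2 / (κ m)^{1/p}) · V_p(f)`. -/
theorem partialDiam_le_lipVar {X Y : Type*}
    [MetricSpace X] [CompleteSpace X] [TopologicalSpace.SeparableSpace X]
    [MeasurableSpace X] [BorelSpace X]
    [MetricSpace Y] [MeasurableSpace Y] [BorelSpace Y]
    (μ : Measure X) [IsFiniteMeasure μ] (hm : μ Set.univ ≠ 0)
    (κ p : ℝ) (hκ : 0 < κ) (hp : 0 < p)
    (f : X → Y) (hf : Measurable f) :
    partialDiam (μ.map f) ((μ Set.univ).toReal - κ)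
      ≤ ENNReal.ofReal (2 / (κ * (μ Set.univ).toReal) ^ (1 / p)) * lipVar μ f p := by
  set m : ℝ≥0∞ := μ Set.univ with hm_def
  have hmtop : m ≠ ∞ := measure_ne_top μ _
  have hmpos : 0 < m.toReal := ENNReal.toReal_pos hm hmtop
  set I : ℝ≥0∞ := ∫⁻ x, ∫⁻ x', edist (f x) (f x') ^ p ∂μ ∂μ with hI_def
  have hlip : lipVar μ f p = I ^ (1 / p) := rfl
  set c : ℝ≥0∞ := ENNReal.ofReal κ * m with hc_def
  have hc0 : c ≠ 0 := by
    simp only [hc_def, ne_eq, mul_eq_zero, ENNReal.ofReal_eq_zero, not_or, not_le]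
    exact ⟨hκ, hm⟩
  have hctop : c ≠ ∞ := ENNReal.mul_ne_top ENNReal.ofReal_ne_top hmtop
  have hapos : (0:ℝ) < (κ * m.toReal) ^ (1 / p) :=
    Real.rpow_pos_of_pos (mul_pos hκ hmpos) _
  -- rewrite the RHS
  have hRHS : ENNReal.ofReal (2 / (κ * m.toReal) ^ (1 / p)) * I ^ (1 / p)
      = 2 * (I / c) ^ (1 / p) := by
    have h1 : ENNReal.ofReal ((κ * m.toReal) ^ (1 / p)) = c ^ (1 / p) := by
      rw [← ENNReal.ofReal_rpow_of_pos (mul_pos hκ hmpos), ENNReal.ofReal_mul hκ.le,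
        ENNReal.ofReal_toReal hmtop]
    rw [ENNReal.ofReal_div_of_pos hapos, h1,
      ENNReal.div_rpow_of_nonneg I c (by positivity : (0:ℝ) ≤ 1 / p)]
    have h2 : ENNReal.ofReal 2 = (2 : ℝ≥0∞) := by norm_num
    rw [h2]
    simp only [div_eq_mul_inv]
    ring
  rw [hlip, hRHS]
  by_cases hItop : I = ∞
  · have htop2 : (I / c) ^ (1 / p) = ∞ := by
      rw [ENNReal.div_eq_top.mpr (Or.inr ⟨hItop, hctop⟩)]
      exact ENNReal.top_rpow_of_pos (by positivity)
    rw [htop2]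
    simp
  -- the radius
  set r : ℝ≥0∞ := (I / c) ^ (1 / p) with hr_def
  have hrtop : r ≠ ∞ :=
    (ENNReal.rpow_lt_top_of_nonneg (by positivity) (ENNReal.div_lt_top hItop hc0).ne).ne
  have hrp : r ^ p = I / c := by
    rw [hr_def, ← ENNReal.rpow_mul, one_div, inv_mul_cancel₀ hp.ne', ENNReal.rpow_one]
  have hIrc : I = r ^ p * c := by
    rw [hrp, ENNReal.div_mul_cancel hc0 hctop]
  have hinner : ∀ x : X, Measurable fun x' => edist (f x) (f x') ^ p := fun x =>
    (((continuous_const.edist continuous_id).measurable).comp hf).pow_const p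
  refine ENNReal.le_of_forall_pos_le_add fun ε hε _ => ?_
  set ε' : ℝ≥0∞ := (ε : ℝ≥0∞) / 2 with hε'_def
  have hε'0 : ε' ≠ 0 := by
    simp [hε'_def, ENNReal.div_eq_zero_iff, hε.ne']
  have hε'top : ε' ≠ ∞ :=
    (ENNReal.div_lt_top ENNReal.coe_ne_top (by norm_num)).ne
  set r' : ℝ≥0∞ := r + ε' with hr'_def
  have hrr' : r < r' := ENNReal.lt_add_right hrtop hε'0
  -- key claim: there is x₀ with μ {x' | r' < edist (f x₀) (f x')} ≤ κ
  have hx₀ : ∃ x₀ : X, μ {x' | r' < edist (f x₀) (f x')} ≤ ENNReal.ofReal κ := by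
    by_contra hcon
    push_neg at hcon
    have hmark : ∀ x : X, r' ^ p * ENNReal.ofReal κ
        ≤ ∫⁻ x', edist (f x) (f x') ^ p ∂μ := by
      intro x
      calc r' ^ p * ENNReal.ofReal κ
          ≤ r' ^ p * μ {x' | r' < edist (f x) (f x')} :=
            mul_le_mul_right (hcon x).le _
        _ ≤ r' ^ p * μ {x' | r' ^ p ≤ edist (f x) (f x') ^ p} := by
            refine mul_le_mul_right (measure_mono fun x' hx' => ?_) _
            exact ENNReal.rpow_le_rpow (le_of_lt hx') hp.le
        _ ≤ ∫⁻ x', edist (f x) (f x') ^ p ∂μ :=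
            mul_meas_ge_le_lintegral₀ (hinner x).aemeasurable _
    have hlow : r' ^ p * c ≤ I := by
      have h := lintegral_mono (μ := μ) hmark
      rw [lintegral_const] at h
      calc r' ^ p * c = r' ^ p * ENNReal.ofReal κ * μ Set.univ := by
            rw [hc_def, hm_def, ← mul_assoc]
        _ ≤ I := by rw [hI_def]; exact h
    rw [hIrc] at hlow
    have h1 : r' ^ p ≤ r ^ p := (ENNReal.mul_le_mul_iff_left hc0 hctop).mp hlow
    have h2 : r' ≤ r := (ENNReal.rpow_le_rpow_iff hp).mp h1
    exact absurd h2 (not_le.mpr hrr')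
  obtain ⟨x₀, hx₀⟩ := hx₀
  -- the closed ball of radius r' around f x₀ works
  set s : Set Y := EMetric.closedBall (f x₀) r' with hs_def
  have hs_meas : MeasurableSet s := EMetric.isClosed_closedBall.measurableSet
  have hcompl : (f ⁻¹' s)ᶜ = {x' | r' < edist (f x₀) (f x')} := by
    ext x'
    simp only [Set.mem_compl_iff, Set.mem_preimage, hs_def, EMetric.closedBall, Metric.mem_closedEBall,
      not_le, Set.mem_setOf_eq, edist_comm]
  have hbound : ENNReal.ofReal (m.toReal - κ) ≤ μ.map f s := by
    rw [Measure.map_apply hf hs_meas]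
    have h1 : m ≤ μ (f ⁻¹' s) + ENNReal.ofReal κ := by
      calc m = μ ((f ⁻¹' s) ∪ (f ⁻¹' s)ᶜ) := by rw [Set.union_compl_self]
        _ ≤ μ (f ⁻¹' s) + μ ((f ⁻¹' s)ᶜ) := measure_union_le _ _
        _ ≤ μ (f ⁻¹' s) + ENNReal.ofReal κ := by
            refine add_le_add_right ?_ _
            rw [hcompl]; exact hx₀
    have h2 : ENNReal.ofReal (m.toReal - κ) = m - ENNReal.ofReal κ := by
      rw [ENNReal.ofReal_sub _ hκ.le, ENNReal.ofReal_toReal hmtop]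
    rw [h2]
    exact tsub_le_iff_right.mpr h1
  calc partialDiam (μ.map f) (m.toReal - κ) ≤ EMetric.diam s :=
        iInf_le_of_le s (iInf_le_of_le hs_meas (iInf_le_of_le hbound le_rfl))
    _ ≤ 2 * r' := EMetric.diam_closedBall
    _ = 2 * (I / c) ^ (1 / p) + ε := by
        rw [hr'_def, mul_add, hε'_def, ENNReal.mul_div_cancel' (by norm_num) (by norm_num),
          hr_def]
end

section
/- Let (X, d_X, μ_X) be an mm-space with finite diameter and total measure m := μ_X(X) > 0, and let (Y, ‖·‖) be a real Hilbert space. Then, for any κ > 0, the observable central radius satisfies ObsCRad_Y(X; −κ) ≤ diam(X →Lip₁ Y, m − κ) + (κ/m)·diam X. -/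
open MeasureTheory Metric Set
open scoped ENNReal

/-- The barycenter `b(ν) = (1/m) ∫ y dν(y)` of a measure on a Hilbert space. -/
noncomputable def hilbBarycenter {H : Type*} [NormedAddCommGroup H] [InnerProductSpace ℝ H]
    [CompleteSpace H] [MeasurableSpace H] (ν : Measure H) : H :=
  ((ν Set.univ).toReal)⁻¹ • ∫ y, y ∂ν

/-- The central radius `CRad(ν, a)`: the infimum of `ρ > 0` such that the closed ball of
radius `ρ` around the barycenter has measure at least `a`. -/
noncomputable def cRad {H : Type*} [NormedAddCommGroup H] [InnerProductSpace ℝ H]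
    [CompleteSpace H] [MeasurableSpace H] (ν : Measure H) (a : ℝ) : ℝ :=
  sInf {ρ : ℝ | 0 < ρ ∧ ENNReal.ofReal a ≤ ν (Metric.closedBall (hilbBarycenter ν) ρ)}

/-- The observable central radius `ObsCRad_H(X; -κ)`. -/
noncomputable def obsCRad (H : Type*) [NormedAddCommGroup H] [InnerProductSpace ℝ H]
    [CompleteSpace H] [MeasurableSpace H]
    {X : Type*} [MetricSpace X] [MeasurableSpace X] (μ : Measure X) (κ : ℝ) : ℝ :=
  sSup {v : ℝ | ∃ f : X → H, LipschitzWith 1 f ∧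
    v = cRad (μ.map f) ((μ Set.univ).toReal - κ)}

section AuxHelpers

variable {X H : Type*} [MetricSpace X] [MeasurableSpace X] [BorelSpace X]
  [MetricSpace H] [MeasurableSpace H] [BorelSpace H]

private lemma aux_map_compl_closure (μ : Measure X) {g : X → H} (hg : Continuous g) :
    (μ.map g) (closure (Set.range g))ᶜ = 0 := by
  rw [Measure.map_apply hg.measurable measurableSet_closure.compl]
  have h : g ⁻¹' (closure (Set.range g))ᶜ = ∅ := by
    ext x
    simp only [Set.mem_preimage, Set.mem_compl_iff, Set.mem_empty_iff_false, iff_false, not_not]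
    exact subset_closure (Set.mem_range_self x)
  rw [h, measure_empty]

private lemma aux_ediam_closure {g : X → H} (hg : LipschitzWith 1 g) :
    EMetric.diam (closure (Set.range g)) ≤ EMetric.diam (Set.univ : Set X) := by
  rw [show EMetric.diam (closure (Set.range g)) = EMetric.diam (Set.range g) from
    Metric.ediam_closure _, ← Set.image_univ]
  have h := hg.ediam_image_le Set.univ
  simp only [ENNReal.coe_one, one_mul] at h
  exact h

private lemma aux_map_univ (μ : Measure X) {g : X → H} (hg : Continuous g) :
    (μ.map g) Set.univ = μ Set.univ := by
  rw [Measure.map_apply hg.measurable MeasurableSet.univ, Set.preimage_univ]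

private lemma aux_map_closure (μ : Measure X) {g : X → H} (hg : Continuous g) :
    (μ.map g) (closure (Set.range g)) = μ Set.univ := by
  have h := measure_inter_conull (μ := μ.map g) (s := (Set.univ : Set H))
    (aux_map_compl_closure μ hg)
  rw [Set.univ_inter] at h
  rw [h, aux_map_univ μ hg]

private lemma aux_partialDiam_le (ν : Measure H) {K : Set H} (hKm : MeasurableSet K)
    {a : ℝ} (ha : ENNReal.ofReal a ≤ ν K) :
    partialDiam ν a ≤ EMetric.diam K :=
  iInf_le_of_le K (iInf_le_of_le hKm (iInf_le_of_le ha le_rfl))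

end AuxHelpers

private lemma aux_cRad_le {X H : Type*}
    [MetricSpace X] [TopologicalSpace.SeparableSpace X]
    [MeasurableSpace X] [BorelSpace X]
    [NormedAddCommGroup H] [InnerProductSpace ℝ H] [CompleteSpace H]
    [MeasurableSpace H] [BorelSpace H]
    (μ : Measure X) [IsFiniteMeasure μ] (hm : μ Set.univ ≠ 0)
    (hd : EMetric.diam (Set.univ : Set X) ≠ ⊤)
    (κ : ℝ) (hκ : 0 < κ) {f : X → H} (hf : LipschitzWith 1 f) :
    cRad (μ.map f) ((μ Set.univ).toReal - κ)
      ≤ (obsDiam H μ ((μ Set.univ).toReal - κ)).toReal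
        + κ / (μ Set.univ).toReal * Metric.diam (Set.univ : Set X) := by
  set m : ℝ := (μ Set.univ).toReal with hmdef
  have hm0 : 0 < m := ENNReal.toReal_pos hm (measure_ne_top μ _)
  set dX : ℝ := Metric.diam (Set.univ : Set X) with hdXdef
  have hdX0 : 0 ≤ dX := Metric.diam_nonneg
  have hXne : Nonempty X := by
    by_contra h
    rw [not_nonempty_iff] at h
    exact hm (by rw [Set.univ_eq_empty_iff.mpr h, measure_empty])
  obtain ⟨x₀⟩ := hXne
  set ν : Measure H := μ.map f with hνdef
  have hνfin : IsFiniteMeasure ν := by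
    constructor
    rw [hνdef, aux_map_univ μ hf.continuous]
    exact measure_lt_top μ _
  set K : Set H := closure (Set.range f) with hKdef
  have hKm : MeasurableSet K := measurableSet_closure
  have hKc : ν Kᶜ = 0 := aux_map_compl_closure μ hf.continuous
  have hKdiam : EMetric.diam K ≤ EMetric.diam (Set.univ : Set X) := aux_ediam_closure hf
  have hKnetop : EMetric.diam K ≠ ⊤ := ne_top_of_le_ne_top hd hKdiam
  have hKb : Bornology.IsBounded K := Metric.isBounded_iff_ediam_ne_top.mpr hKnetop
  have hKdiamR : Metric.diam K ≤ dX := ENNReal.toReal_mono hd hKdiam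
  have hofa : ENNReal.ofReal (m - κ) ≤ μ Set.univ := by
    rw [← ENNReal.ofReal_toReal (measure_ne_top μ Set.univ)]
    exact ENNReal.ofReal_le_ofReal (by linarith)
  have hν_univ : (ν Set.univ).toReal = m := by rw [hνdef, aux_map_univ μ hf.continuous]
  have hobs_fin : obsDiam H μ (m - κ) ≠ ⊤ := by
    refine ne_top_of_le_ne_top hd (iSup₂_le fun g hg => ?_)
    refine (aux_partialDiam_le _ measurableSet_closure ?_).trans (aux_ediam_closure hg)
    rw [aux_map_closure μ hg.continuous]
    exact hofa
  have hpD_le : partialDiam ν (m - κ) ≤ obsDiam H μ (m - κ) :=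
    le_iSup₂ (f := fun (g : X → H) (_ : LipschitzWith 1 g) => partialDiam (μ.map g) (m - κ)) f hf
  have hpD_netop : partialDiam ν (m - κ) ≠ ⊤ := ne_top_of_le_ne_top hobs_fin hpD_le
  have hKae : ∀ᵐ z ∂ν, z ∈ K := by
    rw [MeasureTheory.ae_iff]
    exact hKc
  have hIK : TopologicalSpace.IsSeparable K := (TopologicalSpace.isSeparable_range hf.continuous).closure
  have hfx₀K : f x₀ ∈ K := subset_closure (Set.mem_range_self x₀)
  have h_int : Integrable (fun z : H => z) ν := by
    have hsm : AEStronglyMeasurable (fun z : H => z) ν :=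
      aestronglyMeasurable_iff_aemeasurable_separable.mpr ⟨aemeasurable_id, K, hIK, hKae⟩
    refine Integrable.mono' (g := fun _ => ‖f x₀‖ + dX) (integrable_const _) hsm ?_
    filter_upwards [hKae] with z hz
    have h1 : ‖z‖ - ‖f x₀‖ ≤ ‖z - f x₀‖ := norm_sub_norm_le z (f x₀)
    have h2 : dist z (f x₀) ≤ Metric.diam K := Metric.dist_le_diam_of_mem hKb hz hfx₀K
    rw [dist_eq_norm] at h2
    linarith
  -- main estimate, for every ε > 0
  refine le_of_forall_pos_le_add fun ε hε => ?_
  have hlt : partialDiam ν (m - κ) < partialDiam ν (m - κ) + ENNReal.ofReal ε :=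
    ENNReal.lt_add_right hpD_netop (ENNReal.ofReal_pos.mpr hε).ne'
  obtain ⟨s, hs_meas, hs_ν, hs_diam⟩ :
      ∃ s : Set H, MeasurableSet s ∧ ENNReal.ofReal (m - κ) ≤ ν s ∧
        EMetric.diam s < partialDiam ν (m - κ) + ENNReal.ofReal ε := by
    by_contra hcon
    push_neg at hcon
    have hge : partialDiam ν (m - κ) + ENNReal.ofReal ε ≤ partialDiam ν (m - κ) :=
      le_iInf fun s => le_iInf fun hs1 => le_iInf fun hs2 => hcon s hs1 hs2
    exact absurd hge (not_le.mpr hlt)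
  set S : Set H := s ∩ K with hSdef
  have hS_meas : MeasurableSet S := hs_meas.inter hKm
  have hS_ν : ENNReal.ofReal (m - κ) ≤ ν S := by
    rw [hSdef, measure_inter_conull hKc]
    exact hs_ν
  have hS_sub_K : S ⊆ K := Set.inter_subset_right
  have hS_bdd : Bornology.IsBounded S := hKb.subset hS_sub_K
  set dS : ℝ := Metric.diam S with hdSdef
  have hdS0 : 0 ≤ dS := Metric.diam_nonneg
  have hdS_le : dS ≤ (obsDiam H μ (m - κ)).toReal + ε := by
    have h1 : EMetric.diam S ≤ EMetric.diam s := EMetric.diam_mono Set.inter_subset_left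
    have h3 : EMetric.diam S ≤ obsDiam H μ (m - κ) + ENNReal.ofReal ε :=
      (h1.trans hs_diam.le).trans (add_le_add_left hpD_le _)
    have h4 := ENNReal.toReal_mono
      (ENNReal.add_ne_top.mpr ⟨hobs_fin, ENNReal.ofReal_ne_top⟩) h3
    rwa [ENNReal.toReal_add hobs_fin ENNReal.ofReal_ne_top, ENNReal.toReal_ofReal hε.le] at h4
  set b : H := hilbBarycenter ν with hbdef
  have hbary : b = m⁻¹ • ∫ z, z ∂ν := by rw [hbdef, hilbBarycenter, hν_univ]
  have hνS_le : (ν S).toReal ≤ m := by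
    rw [← hν_univ]
    exact ENNReal.toReal_mono (measure_ne_top ν _) (measure_mono (Set.subset_univ S))
  have hνSc_le : (ν Sᶜ).toReal ≤ κ := by
    by_cases hmk : 0 ≤ m - κ
    · have h1 : ν Sᶜ = ν Set.univ - ν S := measure_compl hS_meas (measure_ne_top ν S)
      have h2 : ν Sᶜ ≤ ENNReal.ofReal m - ENNReal.ofReal (m - κ) := by
        rw [h1]
        have hu : ν Set.univ = ENNReal.ofReal m := by
          rw [hνdef, aux_map_univ μ hf.continuous]
          exact (ENNReal.ofReal_toReal (measure_ne_top μ Set.univ)).symm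
        rw [hu]
        exact tsub_le_tsub_left hS_ν _
      have h3 : ENNReal.ofReal m - ENNReal.ofReal (m - κ) = ENNReal.ofReal κ := by
        rw [← ENNReal.ofReal_sub m hmk]
        ring_nf
      rw [h3] at h2
      exact ENNReal.toReal_le_of_le_ofReal hκ.le h2
    · have h1 : (ν Sᶜ).toReal ≤ (ν Set.univ).toReal :=
        ENNReal.toReal_mono (measure_ne_top ν _) (measure_mono (Set.subset_univ _))
      rw [hν_univ] at h1
      linarith
  have key : ∀ y ∈ S, dist y b ≤ dS + κ / m * dX := by
    intro y hy
    have hyK : y ∈ K := hS_sub_K hy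
    have hub : ∀ᵐ z ∂ν, ‖y - z‖ ≤ S.indicator (fun _ => dS) z + Sᶜ.indicator (fun _ => dX) z := by
      filter_upwards [hKae] with z hz
      by_cases hzS : z ∈ S
      · rw [Set.indicator_of_mem hzS, Set.indicator_of_notMem (by simpa using hzS)]
        have hdyz : dist y z ≤ dS := Metric.dist_le_diam_of_mem hS_bdd hy hzS
        rw [dist_eq_norm] at hdyz
        linarith
      · rw [Set.indicator_of_notMem hzS, Set.indicator_of_mem (Set.mem_compl hzS)]
        have hdyz : dist y z ≤ Metric.diam K := Metric.dist_le_diam_of_mem hKb hyK hz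
        rw [dist_eq_norm] at hdyz
        linarith
    have hint1 : Integrable (fun z : H => y - z) ν := (integrable_const y).sub h_int
    have hintS : Integrable (fun z : H => S.indicator (fun _ => dS) z) ν :=
      (integrable_const dS).indicator hS_meas
    have hintSc : Integrable (fun z : H => Sᶜ.indicator (fun _ => dX) z) ν :=
      (integrable_const dX).indicator hS_meas.compl
    have hJ : ∫ z, ‖y - z‖ ∂ν ≤ (ν S).toReal * dS + (ν Sᶜ).toReal * dX := by
      calc ∫ z, ‖y - z‖ ∂ν
          ≤ ∫ z, (S.indicator (fun _ => dS) z + Sᶜ.indicator (fun _ => dX) z) ∂ν :=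
            integral_mono_ae hint1.norm (hintS.add hintSc) hub
        _ = (ν S).toReal * dS + (ν Sᶜ).toReal * dX := by
            rw [integral_add hintS hintSc, integral_indicator_const _ hS_meas,
              integral_indicator_const _ hS_meas.compl, smul_eq_mul, smul_eq_mul]
            rfl
    have heq : m⁻¹ • ∫ z, (y - z) ∂ν = y - b := by
      rw [integral_sub (integrable_const y) h_int, integral_const, measureReal_def, hν_univ, smul_sub,
        smul_smul, inv_mul_cancel₀ hm0.ne', one_smul, hbary]
    have hnormyb : ‖y - b‖ ≤ m⁻¹ * ((ν S).toReal * dS + (ν Sᶜ).toReal * dX) := by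
      rw [← heq]
      calc ‖m⁻¹ • ∫ z, (y - z) ∂ν‖ = m⁻¹ * ‖∫ z, (y - z) ∂ν‖ := by
            rw [norm_smul, Real.norm_eq_abs, abs_of_pos (inv_pos.mpr hm0)]
        _ ≤ m⁻¹ * ∫ z, ‖y - z‖ ∂ν :=
            mul_le_mul_of_nonneg_left (norm_integral_le_integral_norm _) (inv_pos.mpr hm0).le
        _ ≤ _ := mul_le_mul_of_nonneg_left hJ (inv_pos.mpr hm0).le
    have hstep : ‖y - b‖ ≤ m⁻¹ * (m * dS + κ * dX) := by
      refine hnormyb.trans (mul_le_mul_of_nonneg_left ?_ (inv_pos.mpr hm0).le)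
      have h1 := mul_le_mul_of_nonneg_right hνS_le hdS0
      have h2 := mul_le_mul_of_nonneg_right hνSc_le hdX0
      linarith
    have hfinal : m⁻¹ * (m * dS + κ * dX) = dS + κ / m * dX := by
      field_simp
    rw [dist_eq_norm]
    rw [hfinal] at hstep
    exact hstep
  have hmem : (0 < (obsDiam H μ (m - κ)).toReal + κ / m * dX + ε) ∧
      ENNReal.ofReal (m - κ)
        ≤ ν (Metric.closedBall b ((obsDiam H μ (m - κ)).toReal + κ / m * dX + ε)) := by
    constructor
    · have : (0:ℝ) ≤ (obsDiam H μ (m - κ)).toReal := ENNReal.toReal_nonneg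
      have h2 : (0:ℝ) ≤ κ / m * dX := mul_nonneg (div_nonneg hκ.le hm0.le) hdX0
      linarith
    · refine hS_ν.trans (measure_mono fun y hy => ?_)
      have h1 := key y hy
      have h2 : dist y b ≤ (obsDiam H μ (m - κ)).toReal + κ / m * dX + ε := by linarith
      exact Metric.mem_closedBall.mpr h2
  have hcRad : cRad ν (m - κ) ≤ (obsDiam H μ (m - κ)).toReal + κ / m * dX + ε := by
    rw [hbdef] at hmem
    unfold cRad
    exact csInf_le ⟨0, fun x hx => hx.1.le⟩ hmem
  exact hcRad

/-- For an mm-space `X` of finite diameter with `m > 0` and a real Hilbert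
space `Y`, `ObsCRad_Y(X; -κ) ≤ diam(X →Lip₁ Y, m - κ) + (κ/m) diam X`. -/
theorem obsCRad_le_obsDiam_add {X H : Type*}
    [MetricSpace X] [CompleteSpace X] [TopologicalSpace.SeparableSpace X]
    [MeasurableSpace X] [BorelSpace X]
    [NormedAddCommGroup H] [InnerProductSpace ℝ H] [CompleteSpace H]
    [MeasurableSpace H] [BorelSpace H]
    (μ : Measure X) [IsFiniteMeasure μ] (hm : μ Set.univ ≠ 0)
    (hd : EMetric.diam (Set.univ : Set X) ≠ ⊤)
    (κ : ℝ) (hκ : 0 < κ) :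
    obsCRad H μ κ
      ≤ (obsDiam H μ ((μ Set.univ).toReal - κ)).toReal
        + κ / (μ Set.univ).toReal * Metric.diam (Set.univ : Set X) := by
  have hm0 : 0 < (μ Set.univ).toReal := ENNReal.toReal_pos hm (measure_ne_top μ _)
  have hrhs : 0 ≤ (obsDiam H μ ((μ Set.univ).toReal - κ)).toReal
      + κ / (μ Set.univ).toReal * Metric.diam (Set.univ : Set X) :=
    add_nonneg ENNReal.toReal_nonneg
      (mul_nonneg (div_nonneg hκ.le hm0.le) Metric.diam_nonneg)
  unfold obsCRad
  refine Real.sSup_le ?_ hrhs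
  rintro v ⟨f, hf, rfl⟩
  exact aux_cRad_le μ hm hd κ hκ hf
end

section
/- Let {(X_n, d_n, μ_n)}_{n=1}^∞ be a Lévy family of mm-spaces with inf_n m_n > 0 (where m_n := μ_n(X_n)), and let {Y_n}_{n=1}^∞ be a sequence of metric spaces such that: (1) X_n equals the support of μ_n and is connected; (2) for any r > 0 and n, all closed balls in X_n of radius r have the same μ_n-measure; (3) for each n there exists an isometric embedding from X_n into Y_n. Then, for any κ with 0 < κ < inf_n m_n, one has liminf_{n→∞} diam(X_n →Lip₁ Y_n, m_n − κ) ≥ (1/2)·liminf_{n→∞} diam X_n. -/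
open MeasureTheory Metric Set
open scoped ENNReal

private lemma inter_nonempty_of_compl' {X : Type*} [MeasurableSpace X] (μ : Measure X)
    {A B : Set X} {a b : ℝ≥0∞} (hA : μ Aᶜ ≤ a) (hB : μ Bᶜ ≤ b)
    (hab : a + b < μ Set.univ) : (A ∩ B).Nonempty := by
  rcases (A ∩ B).eq_empty_or_nonempty with h | h
  · exfalso
    have huniv : (Set.univ : Set X) = Aᶜ ∪ Bᶜ := by
      rw [← Set.compl_inter, h, Set.compl_empty]
    have h2 : μ Set.univ ≤ μ Aᶜ + μ Bᶜ := by
      rw [huniv]; exact measure_union_le _ _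
    exact absurd (h2.trans (add_le_add hA hB)) (not_le.mpr hab)
  · exact h

private lemma exists_annulus' {X : Type*} [MetricSpace X] [MeasurableSpace X] [BorelSpace X]
    (μ : Measure X) {a δ : ℝ} (ha : 0 < a) (hδ : 0 < δ)
    (hobs : obsDiam ℝ μ a < ENNReal.ofReal δ) (x : X) :
    ∃ t : ℝ, 0 ≤ t ∧ ∃ T : Set X, MeasurableSet T ∧ ENNReal.ofReal a ≤ μ T ∧
      ∀ y ∈ T, |dist y x - t| < δ := by
  have hf : LipschitzWith 1 (fun y : X => dist y x) := LipschitzWith.dist_left x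
  have hle : partialDiam (μ.map fun y : X => dist y x) a ≤ obsDiam ℝ μ a :=
    le_iSup₂ (f := fun (g : X → ℝ) (_ : LipschitzWith 1 g) => partialDiam (μ.map g) a)
      (fun y : X => dist y x) hf
  have h2 : partialDiam (μ.map fun y : X => dist y x) a < ENNReal.ofReal δ :=
    lt_of_le_of_lt hle hobs
  rw [partialDiam] at h2
  simp only [iInf_lt_iff] at h2
  obtain ⟨S, hSm, hSμ, hSd⟩ := h2
  have hfm : Measurable fun y : X => dist y x := hf.continuous.measurable
  rw [Measure.map_apply hfm hSm] at hSμ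
  have hpos : (0 : ℝ≥0∞) < μ ((fun y : X => dist y x) ⁻¹' S) :=
    lt_of_lt_of_le (ENNReal.ofReal_pos.mpr ha) hSμ
  obtain ⟨x₀, hx₀⟩ := nonempty_of_measure_ne_zero hpos.ne'
  refine ⟨dist x₀ x, dist_nonneg, (fun y : X => dist y x) ⁻¹' S, hfm hSm, hSμ, ?_⟩
  intro y hy
  have h3 : edist (dist y x) (dist x₀ x) < ENNReal.ofReal δ :=
    lt_of_le_of_lt (EMetric.edist_le_diam_of_mem hy hx₀) hSd
  rw [edist_dist] at h3
  have h4 : dist (dist y x) (dist x₀ x) < δ := by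
    by_contra hcc
    push_neg at hcc
    exact absurd (ENNReal.ofReal_le_ofReal hcc) (not_le.mpr h3)
  rwa [Real.dist_eq] at h4

private lemma key_bound' {X Y : Type*} [MetricSpace X] [MeasurableSpace X] [BorelSpace X]
    [MetricSpace Y] [MeasurableSpace Y] [BorelSpace Y]
    (μ : Measure X) [IsFiniteMeasure μ]
    (hballs : ∀ r : ℝ, 0 < r → ∀ x y : X,
      μ (Metric.closedBall x r) = μ (Metric.closedBall y r))
    {ι : X → Y} (hι : Isometry ι) {κ κ' δ : ℝ} (hκ : 0 < κ) (hκ' : 0 < κ') (hδ : 0 < δ)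
    (hm1 : κ + κ' < (μ Set.univ).toReal) (hm2 : 2 * κ' < (μ Set.univ).toReal)
    (hobs : obsDiam ℝ μ ((μ Set.univ).toReal - κ') < ENNReal.ofReal δ)
    (p q : X) :
    ENNReal.ofReal (dist p q / 2 - 7 * δ) ≤ obsDiam Y μ ((μ Set.univ).toReal - κ) := by
  set m := (μ Set.univ).toReal with hm
  have hmuniv : μ Set.univ = ENNReal.ofReal m :=
    (ENNReal.ofReal_toReal (measure_ne_top μ _)).symm
  have ha : 0 < m - κ' := by linarith
  choose t ht0 T hTmeas hTμ hTdist using exists_annulus' μ ha hδ hobs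
  have hTc : ∀ x : X, μ (T x)ᶜ ≤ ENNReal.ofReal κ' := by
    intro x
    rw [measure_compl (hTmeas x) (measure_ne_top μ _), hmuniv]
    refine le_trans (tsub_le_tsub_left (hTμ x) _) ?_
    rw [← ENNReal.ofReal_sub m ha.le]
    exact ENNReal.ofReal_le_ofReal (by linarith)
  have hcb_lower : ∀ (x : X) (r : ℝ), t x + δ ≤ r →
      ENNReal.ofReal (m - κ') ≤ μ (Metric.closedBall x r) := by
    intro x r hr
    refine le_trans (hTμ x) (measure_mono ?_)
    intro y hy
    have h := hTdist x y hy
    rw [abs_lt] at h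
    simp only [Metric.mem_closedBall]
    linarith [h.2]
  have hcomp : ∀ x y : X, t y ≤ t x + 3 * δ := by
    intro x y
    by_contra hcon
    push_neg at hcon
    have hρ : 0 < t x + 2 * δ := by have := ht0 x; linarith
    have heq := hballs _ hρ x y
    have h1 : ENNReal.ofReal (m - κ') ≤ μ (Metric.closedBall y (t x + 2 * δ)) := by
      rw [← heq]; exact hcb_lower x _ (by linarith)
    have h2 : μ (Metric.closedBall y (t x + 2 * δ)) ≤ ENNReal.ofReal κ' := by
      refine le_trans (measure_mono ?_) (hTc y)
      intro z hz
      simp only [Metric.mem_closedBall] at hz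
      simp only [Set.mem_compl_iff]
      intro hzT
      have h := hTdist y z hzT
      rw [abs_lt] at h
      linarith [h.1]
    have h3 := (ENNReal.ofReal_le_ofReal_iff hκ'.le).mp (h1.trans h2)
    linarith
  have hpair : dist p q ≤ t p + t q + 2 * δ := by
    obtain ⟨x, hxp, hxq⟩ := inter_nonempty_of_compl' μ (hTc p) (hTc q) (by
      rw [hmuniv, ← ENNReal.ofReal_add hκ'.le hκ'.le]
      exact (ENNReal.ofReal_lt_ofReal_iff (by linarith)).mpr (by linarith))
    have h1 := hTdist p x hxp
    have h2 := hTdist q x hxq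
    rw [abs_lt] at h1 h2
    have h3 := dist_triangle p x q
    rw [dist_comm p x] at h3
    linarith [h1.2, h2.2]
  have htlow : ∀ a : X, dist p q / 2 - 11 * δ / 2 ≤ t a := by
    intro a
    have h1 := hcomp a p
    have h2 := hcomp p q
    linarith
  have hm0 : 0 < m := by linarith
  refine le_trans ?_ (le_iSup₂ (f := fun (g : X → Y) (_ : LipschitzWith 1 g) =>
      partialDiam (μ.map g) (m - κ)) ι hι.lipschitz)
  refine le_iInf fun s => le_iInf fun hs => le_iInf fun hμs => ?_
  rw [Measure.map_apply hι.continuous.measurable hs] at hμs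
  obtain ⟨a, ha'⟩ := nonempty_of_measure_ne_zero
    (lt_of_lt_of_le (ENNReal.ofReal_pos.mpr (show (0:ℝ) < m - κ by linarith)) hμs).ne'
  have hA'c : μ (ι ⁻¹' s)ᶜ ≤ ENNReal.ofReal κ := by
    rw [measure_compl (hι.continuous.measurable hs) (measure_ne_top μ _), hmuniv]
    refine le_trans (tsub_le_tsub_left hμs _) ?_
    rw [← ENNReal.ofReal_sub m (by linarith)]
    exact ENNReal.ofReal_le_ofReal (by linarith)
  obtain ⟨b, hbA, hbT⟩ := inter_nonempty_of_compl' μ hA'c (hTc a) (by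
    rw [hmuniv, ← ENNReal.ofReal_add hκ.le hκ'.le]
    exact (ENNReal.ofReal_lt_ofReal_iff hm0).mpr hm1)
  have hd : dist p q / 2 - 7 * δ ≤ dist a b := by
    have h1 := hTdist a b hbT
    rw [abs_lt] at h1
    have h2 := htlow a
    rw [dist_comm a b]
    linarith [h1.1]
  calc ENNReal.ofReal (dist p q / 2 - 7 * δ)
      ≤ ENNReal.ofReal (dist a b) := ENNReal.ofReal_le_ofReal hd
    _ = edist a b := (edist_dist a b).symm
    _ = edist (ι a) (ι b) := (hι a b).symm
    _ ≤ EMetric.diam s := EMetric.edist_le_diam_of_mem ha' hbA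

/-- If `{X_n}` is a Lévy family with `inf_n m_n > 0`, each `X_n` is the
connected support of `μ_n`, all closed balls of a given radius in `X_n` have equal measure,
and each `X_n` embeds isometrically into `Y_n`, then for `0 < κ < inf_n m_n`,
`liminf diam(X_n →Lip₁ Y_n, m_n - κ) ≥ (1/2) liminf diam X_n`. -/
theorem liminf_obsDiam_ge {X Y : ℕ → Type*}
    [∀ n, MetricSpace (X n)] [∀ n, CompleteSpace (X n)]
    [∀ n, TopologicalSpace.SeparableSpace (X n)]
    [∀ n, MeasurableSpace (X n)] [∀ n, BorelSpace (X n)]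
    [∀ n, MetricSpace (Y n)] [∀ n, MeasurableSpace (Y n)] [∀ n, BorelSpace (Y n)]
    (μ : ∀ n, Measure (X n)) [∀ n, IsFiniteMeasure (μ n)]
    (hLevy : ∀ κ : ℝ, 0 < κ → Filter.Tendsto
      (fun n => obsDiam ℝ (μ n) (((μ n) Set.univ).toReal - κ)) Filter.atTop (nhds 0))
    (hinf : 0 < ⨅ n, ((μ n) Set.univ).toReal)
    (hsupp : ∀ n, measureSupport (μ n) = Set.univ)
    (hconn : ∀ n, IsConnected (Set.univ : Set (X n)))
    (hballs : ∀ n, ∀ r : ℝ, 0 < r → ∀ x y : X n,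
      (μ n) (Metric.closedBall x r) = (μ n) (Metric.closedBall y r))
    (hemb : ∀ n, ∃ ι : X n → Y n, Isometry ι)
    (κ : ℝ) (h0 : 0 < κ) (h1 : κ < ⨅ n, ((μ n) Set.univ).toReal) :
    (1 / 2 : ℝ≥0∞) * Filter.liminf
        (fun n => EMetric.diam (Set.univ : Set (X n))) Filter.atTop
      ≤ Filter.liminf
        (fun n => obsDiam (Y n) (μ n) (((μ n) Set.univ).toReal - κ)) Filter.atTop := by
  set L := Filter.liminf (fun n => EMetric.diam (Set.univ : Set (X n))) Filter.atTop with hL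
  by_contra hcon
  push_neg at hcon
  obtain ⟨c, hc1, hc2⟩ := exists_between hcon
  obtain ⟨d, hcd, hd2⟩ := exists_between hc2
  have hdne : d ≠ ⊤ := hd2.ne_top
  have hcne : c ≠ ⊤ := hcd.ne_top
  have h2d : 2 * d < L := by
    have hmul := (ENNReal.mul_lt_mul_iff_right (a := (2:ℝ≥0∞)) two_ne_zero ENNReal.ofNat_ne_top).mpr hd2
    have h212 : (2:ℝ≥0∞) * ((1/2 : ℝ≥0∞) * L) = L := by
      rw [← mul_assoc, one_div, ENNReal.mul_inv_cancel two_ne_zero ENNReal.ofNat_ne_top, one_mul]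
    rwa [h212] at hmul
  have hcρ : c.toReal < d.toReal := (ENNReal.toReal_lt_toReal hcne hdne).mpr hcd
  set ρ := d.toReal with hρ
  set δ := (ρ - c.toReal) / 7 with hδdef
  have hδ : 0 < δ := by rw [hδdef]; linarith
  set mInf := ⨅ n, ((μ n) Set.univ).toReal with hmInf
  have hκ' : 0 < (mInf - κ) / 2 := by linarith
  set κ' := (mInf - κ) / 2 with hκ'def
  have hminf : ∀ n, mInf ≤ ((μ n) Set.univ).toReal := fun n =>
    ciInf_le ⟨0, by rintro x ⟨n, rfl⟩; exact ENNReal.toReal_nonneg⟩ n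
  have E1 := (hLevy κ' hκ').eventually (gt_mem_nhds (ENNReal.ofReal_pos.mpr hδ))
  have E2 := Filter.eventually_lt_of_lt_liminf h2d
  have Ekey : ∀ᶠ n in Filter.atTop,
      c ≤ obsDiam (Y n) (μ n) (((μ n) Set.univ).toReal - κ) := by
    filter_upwards [E1, E2] with n hn1 hn2
    obtain ⟨ι, hι⟩ := hemb n
    have hpq : ∃ p q : X n, 2 * d < edist p q := by
      by_contra hno
      push_neg at hno
      exact absurd hn2 (not_lt.mpr (EMetric.diam_le fun p _ q _ => hno p q))
    obtain ⟨p, q, hpq⟩ := hpq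
    have hdpq : 2 * ρ < dist p q := by
      have h2dne : (2 : ℝ≥0∞) * d ≠ ⊤ := ENNReal.mul_ne_top ENNReal.ofNat_ne_top hdne
      have h := (ENNReal.toReal_lt_toReal h2dne (edist_ne_top p q)).mpr hpq
      rw [ENNReal.toReal_mul] at h
      simpa [dist_edist] using h
    have hm1 : κ + κ' < ((μ n) Set.univ).toReal := by
      have := hminf n; rw [hκ'def]; linarith
    have hm2 : 2 * κ' < ((μ n) Set.univ).toReal := by
      have := hminf n; rw [hκ'def]; linarith
    have key := key_bound' (μ n) (hballs n) hι h0 hκ' hδ hm1 hm2 hn1 p q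
    refine le_trans ?_ key
    rw [show c = ENNReal.ofReal c.toReal from (ENNReal.ofReal_toReal hcne).symm]
    refine ENNReal.ofReal_le_ofReal ?_
    rw [hδdef]
    linarith
  have hfin : c ≤ Filter.liminf
      (fun n => obsDiam (Y n) (μ n) (((μ n) Set.univ).toReal - κ)) Filter.atTop :=
    Filter.le_liminf_of_le (h := Ekey)
  exact absurd hfin (not_le.mpr hc1)
end

section
/- Let μ_n denote the volume measure on the n-dimensional unit sphere 𝕊ⁿ ⊂ ℝ^{n+1} normalized so that μ_n(𝕊ⁿ) = 1, and regard 𝕊ⁿ as an mm-space with its geodesic (round) metric. Then, for any κ with 0 < κ < 1, one has liminf_{n→∞} diam(𝕊ⁿ →Lip₁ ℝ^{n+1}, 1 − κ) > 0. -/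
open MeasureTheory Metric Set
open scoped ENNReal

open scoped RealInnerProductSpace

section Aux
open scoped RealInnerProductSpace

lemma chord_le_arccos {F : Type*} [NormedAddCommGroup F] [InnerProductSpace ℝ F]
    {x y : F} (hx : ‖x‖ = 1) (hy : ‖y‖ = 1) : dist x y ≤ Real.arccos ⟪x, y⟫ := by
  have h1 : ⟪x, y⟫ ≤ 1 := by
    have := real_inner_le_norm x y; rw [hx, hy] at this; linarith
  have h2 : -1 ≤ ⟪x, y⟫ := by
    have := abs_real_inner_le_norm x y; rw [hx, hy] at this
    have := neg_abs_le ⟪x, y⟫; linarith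
  set θ := Real.arccos ⟪x, y⟫ with hθ
  have hθ0 : 0 ≤ θ := Real.arccos_nonneg _
  have hcos : Real.cos θ = ⟪x, y⟫ := Real.cos_arccos h2 h1
  have hsq : dist x y ^ 2 = 2 - 2 * Real.cos θ := by
    rw [dist_eq_norm, norm_sub_sq_real, hx, hy, hcos]; ring
  have hb : 1 - θ ^ 2 / 2 ≤ Real.cos θ := Real.one_sub_sq_div_two_le_cos
  nlinarith [dist_nonneg (x := x) (y := y)]

noncomputable def sphereMap {F : Type*} [NormedAddCommGroup F] [InnerProductSpace ℝ F]
    (R : F ≃ₗᵢ[ℝ] F) : Metric.sphere (0 : F) 1 ≃ᵢ Metric.sphere (0 : F) 1 where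
  toFun x := ⟨R x, by
    rw [mem_sphere_zero_iff_norm, R.norm_map]
    exact mem_sphere_zero_iff_norm.mp x.2⟩
  invFun x := ⟨R.symm x, by
    rw [mem_sphere_zero_iff_norm, R.symm.norm_map]
    exact mem_sphere_zero_iff_norm.mp x.2⟩
  left_inv x := by simp
  right_inv x := by simp
  isometry_toFun := Isometry.of_dist_eq fun x y => by
    simp [Subtype.dist_eq, R.dist_map]

lemma key_diam_lower {n k : ℕ} (hk : k ≤ n + 1) {κ : ℝ} (hκ1 : κ < 1)
    (hκk : 1 < (k : ℝ) * (1 - κ))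
    (A : Set (Metric.sphere (0 : EuclideanSpace ℝ (Fin (n + 1))) 1)) (hA : MeasurableSet A)
    (hm : ENNReal.ofReal (1 - κ) ≤
      ((((μH[(n : ℝ)] : Measure (Metric.sphere (0 : EuclideanSpace ℝ (Fin (n + 1))) 1))
          Set.univ)⁻¹ •
        (μH[(n : ℝ)] : Measure (Metric.sphere (0 : EuclideanSpace ℝ (Fin (n + 1))) 1))) A)) :
    ENNReal.ofReal (Real.sqrt 2 / 2) ≤ EMetric.diam A := by
  classical
  set μ : Measure (Metric.sphere (0 : EuclideanSpace ℝ (Fin (n + 1))) 1) := μH[(n : ℝ)]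
    with hμdef
  set m : ℝ≥0∞ := μ Set.univ with hmdef
  have hκpos : (0 : ℝ) < 1 - κ := by linarith
  have hm' : ENNReal.ofReal (1 - κ) ≤ m⁻¹ * μ A := by
    simpa [Measure.smul_apply, smul_eq_mul] using hm
  rcases eq_or_ne m 0 with h0 | h0
  · exfalso
    have hz : μ A = 0 := le_antisymm (h0 ▸ measure_mono (subset_univ A)) zero_le
    rw [hz, mul_zero] at hm'
    exact (ENNReal.ofReal_pos.mpr hκpos).ne' (le_antisymm hm' zero_le)
  rcases eq_or_ne m ⊤ with htop | htop
  · exfalso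
    rw [htop, ENNReal.inv_top, zero_mul] at hm'
    exact (ENNReal.ofReal_pos.mpr hκpos).ne' (le_antisymm hm' zero_le)
  have hμA : ENNReal.ofReal (1 - κ) * m ≤ μ A := by
    calc ENNReal.ofReal (1 - κ) * m ≤ m⁻¹ * μ A * m := mul_le_mul_left hm' m
      _ = μ A * (m⁻¹ * m) := by ring
      _ = μ A := by rw [ENNReal.inv_mul_cancel h0 htop, mul_one]
  have hApos : μ A ≠ 0 := by
    intro h
    rw [h] at hμA
    exact absurd (le_antisymm hμA zero_le)
      (mul_ne_zero (ENNReal.ofReal_pos.mpr hκpos).ne' h0)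
  obtain ⟨a, ha⟩ : A.Nonempty := nonempty_of_measure_ne_zero hApos
  by_contra hdiam
  push_neg at hdiam
  set e : Fin k → EuclideanSpace ℝ (Fin (n + 1)) :=
    fun j => EuclideanSpace.single ⟨(j : ℕ), lt_of_lt_of_le j.2 hk⟩ 1 with he
  have hnorm_e : ∀ j, ‖e j‖ = 1 := fun j => by
    rw [he]; rw [EuclideanSpace.norm_single, norm_one]
  have hdist_e : ∀ i j : Fin k, i ≠ j → dist (e i) (e j) = Real.sqrt 2 := by
    intro i j hij
    have hinj : (⟨(i : ℕ), lt_of_lt_of_le i.2 hk⟩ : Fin (n + 1)) ≠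
        ⟨(j : ℕ), lt_of_lt_of_le j.2 hk⟩ := by
      simp only [ne_eq, Fin.mk.injEq]
      exact fun h => hij (Fin.ext h)
    have hip : ⟪e i, e j⟫ = 0 := by
      rw [he]
      simp only [EuclideanSpace.inner_single_left, starRingEnd_apply, star_one, one_mul,
        EuclideanSpace.single_apply]
      exact if_neg hinj
    have h2 : dist (e i) (e j) ^ 2 = 2 := by
      rw [dist_eq_norm, norm_sub_sq_real, hnorm_e, hnorm_e, hip]; ring
    rw [show (2 : ℝ) = dist (e i) (e j) ^ 2 from h2.symm, Real.sqrt_sq dist_nonneg]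
  have hanorm : ‖(a : EuclideanSpace ℝ (Fin (n + 1)))‖ = 1 := mem_sphere_zero_iff_norm.mp a.2
  set R : Fin k → (EuclideanSpace ℝ (Fin (n + 1)) ≃ₗᵢ[ℝ] EuclideanSpace ℝ (Fin (n + 1))) :=
    fun j => Submodule.reflection (ℝ ∙ ((a : EuclideanSpace ℝ (Fin (n + 1))) - e j))ᗮ with hR
  have hRa : ∀ j, R j (a : EuclideanSpace ℝ (Fin (n + 1))) = e j := fun j =>
    Submodule.reflection_sub (by rw [hanorm, hnorm_e])
  set φ : Fin k → (Metric.sphere (0 : EuclideanSpace ℝ (Fin (n + 1))) 1 ≃ᵢ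
      Metric.sphere (0 : EuclideanSpace ℝ (Fin (n + 1))) 1) :=
    fun j => sphereMap (R j) with hφ
  have hφval : ∀ j (x : Metric.sphere (0 : EuclideanSpace ℝ (Fin (n + 1))) 1),
      ((φ j x :) : EuclideanSpace ℝ (Fin (n + 1))) = R j (x : EuclideanSpace ℝ (Fin (n + 1))) :=
    fun j x => rfl
  set T : Fin k → Set (Metric.sphere (0 : EuclideanSpace ℝ (Fin (n + 1))) 1) :=
    fun j => (φ j) '' A with hT
  have hTmeas : ∀ j, MeasurableSet (T j) := by
    intro j
    show MeasurableSet ((φ j) '' A)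
    rw [Set.image_eq_preimage_of_inverse (φ j).symm_apply_apply (φ j).apply_symm_apply]
    exact (φ j).symm.continuous.measurable hA
  have hTμ : ∀ j, μ (T j) = μ A := fun j =>
    (φ j).isometry.hausdorffMeasure_image (Or.inl (Nat.cast_nonneg n)) A
  have hnear : ∀ j y, y ∈ T j → edist y (φ j a) ≤ EMetric.diam A := by
    rintro j y ⟨x, hx, rfl⟩
    rw [(φ j).isometry.edist_eq]
    exact EMetric.edist_le_diam_of_mem hx ha
  have hdisj : Pairwise (Function.onFun Disjoint T) := by
    intro i j hij
    rw [Function.onFun, Set.disjoint_left]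
    intro y hyi hyj
    have h1 := hnear i y hyi
    have h2 := hnear j y hyj
    have hedist : edist (φ i a) (φ j a) = ENNReal.ofReal (Real.sqrt 2) := by
      rw [edist_dist, Subtype.dist_eq, hφval, hφval, hRa, hRa, hdist_e i j hij]
    have htri : edist (φ i a) (φ j a) ≤ EMetric.diam A + EMetric.diam A :=
      le_trans (edist_triangle _ y _) (by
        rw [edist_comm (φ i a) y]
        exact add_le_add h1 h2)
    rw [hedist] at htri
    have hsum : EMetric.diam A + EMetric.diam A <
        ENNReal.ofReal (Real.sqrt 2 / 2) + ENNReal.ofReal (Real.sqrt 2 / 2) :=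
      ENNReal.add_lt_add hdiam hdiam
    rw [← ENNReal.ofReal_add (by positivity) (by positivity),
      show Real.sqrt 2 / 2 + Real.sqrt 2 / 2 = Real.sqrt 2 by ring] at hsum
    exact lt_irrefl _ (lt_of_le_of_lt htri hsum)
  have hsum : (k : ℝ≥0∞) * μ A ≤ m := by
    have hu := measure_iUnion (μ := μ) hdisj hTmeas
    calc (k : ℝ≥0∞) * μ A = ∑' j : Fin k, μ (T j) := by
          rw [tsum_fintype]
          simp [hTμ, Finset.sum_const, Finset.card_univ, nsmul_eq_mul]
      _ = μ (⋃ j, T j) := hu.symm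
      _ ≤ m := measure_mono (subset_univ _)
  have hfinal : (k : ℝ≥0∞) * (ENNReal.ofReal (1 - κ) * m) ≤ m :=
    le_trans (mul_le_mul_right hμA _) hsum
  have hgt : (1 : ℝ≥0∞) * m < (k : ℝ≥0∞) * ENNReal.ofReal (1 - κ) * m := by
    rw [ENNReal.mul_lt_mul_iff_left h0 htop]
    calc (1 : ℝ≥0∞) = ENNReal.ofReal 1 := by simp
      _ < ENNReal.ofReal ((k : ℝ) * (1 - κ)) := by
          rw [ENNReal.ofReal_lt_ofReal_iff (by positivity)]; exact hκk
      _ = (k : ℝ≥0∞) * ENNReal.ofReal (1 - κ) := by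
          rw [ENNReal.ofReal_mul (Nat.cast_nonneg k), ENNReal.ofReal_natCast]
  rw [one_mul, mul_assoc] at hgt
  exact absurd hfinal (not_le.mpr hgt)

end Aux

/-- Let `μ_n` be the volume measure (the normalized `n`-dimensional
Hausdorff measure) on the unit sphere `𝕊ⁿ ⊂ ℝ^{n+1}`, with the geodesic (round) metric
`d(x, y) = arccos ⟪x, y⟫`. Then for any `0 < κ < 1`,
`liminf_{n→∞} diam(𝕊ⁿ →Lip₁ ℝ^{n+1}, 1 - κ) > 0`, where the observable diameter is taken
over all maps that are `1`-Lipschitz with respect to the geodesic metric. -/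
theorem liminf_obsDiam_sphere_pos (κ : ℝ) (h0 : 0 < κ) (h1 : κ < 1) :
    0 < Filter.liminf (fun n : ℕ =>
      ⨆ (f : Metric.sphere (0 : EuclideanSpace ℝ (Fin (n + 1))) 1 →
            EuclideanSpace ℝ (Fin (n + 1)))
        (_ : ∀ x y : Metric.sphere (0 : EuclideanSpace ℝ (Fin (n + 1))) 1,
          dist (f x) (f y) ≤
            Real.arccos ⟪(x : EuclideanSpace ℝ (Fin (n + 1))),
              (y : EuclideanSpace ℝ (Fin (n + 1)))⟫),
        partialDiam
          ((((μH[(n : ℝ)] :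
                Measure (Metric.sphere (0 : EuclideanSpace ℝ (Fin (n + 1))) 1)) Set.univ)⁻¹ •
              (μH[(n : ℝ)] :
                Measure (Metric.sphere (0 : EuclideanSpace ℝ (Fin (n + 1))) 1))).map f)
          (1 - κ)) Filter.atTop := by
    classical
  set k : ℕ := ⌈1 / (1 - κ)⌉₊ + 1 with hkdef
  have hκpos : (0 : ℝ) < 1 - κ := by linarith
  have hκk : 1 < (k : ℝ) * (1 - κ) := by
    have h1' : 1 / (1 - κ) ≤ (⌈1 / (1 - κ)⌉₊ : ℝ) := Nat.le_ceil _
    have hkr : (k : ℝ) = (⌈1 / (1 - κ)⌉₊ : ℝ) + 1 := by rw [hkdef]; push_cast; ring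
    have : 1 / (1 - κ) * (1 - κ) = 1 := by field_simp
    nlinarith
  have hc : (0 : ℝ≥0∞) < ENNReal.ofReal (Real.sqrt 2 / 2) :=
    ENNReal.ofReal_pos.mpr (by positivity)
  refine lt_of_lt_of_le hc (Filter.le_liminf_of_le (by isBoundedDefault) ?_)
  filter_upwards [Filter.eventually_ge_atTop k] with n hn
  refine le_iSup₂_of_le
    (fun x : Metric.sphere (0 : EuclideanSpace ℝ (Fin (n + 1))) 1 =>
      (x : EuclideanSpace ℝ (Fin (n + 1))))
    (fun x y => chord_le_arccos (mem_sphere_zero_iff_norm.mp x.2)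
      (mem_sphere_zero_iff_norm.mp y.2)) ?_
  rw [partialDiam]
  refine le_iInf fun s => le_iInf fun hs => le_iInf fun hνs => ?_
  rw [Measure.map_apply measurable_subtype_coe hs] at hνs
  have hkey := key_diam_lower (le_trans hn (Nat.le_succ n)) h1 hκk
    (Subtype.val ⁻¹' s) (measurable_subtype_coe hs) hνs
  calc ENNReal.ofReal (Real.sqrt 2 / 2)
      ≤ EMetric.diam (Subtype.val ⁻¹' s) := hkey
    _ = EMetric.diam (Subtype.val '' (Subtype.val ⁻¹' s) :
          Set (EuclideanSpace ℝ (Fin (n + 1)))) :=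
        (Isometry.ediam_image isometry_subtype_coe _).symm
    _ ≤ EMetric.diam s := EMetric.diam_mono (Set.image_preimage_subset _ _)
end

section
/- Let (X, d, μ) be an mm-space with total measure m := μ(X). For any n ∈ ℕ and κ > 0, the observable diameters satisfy diam(X →Lip₁ ℝⁿ, m − nκ) ≤ √n · diam(X →Lip₁ ℝ, m − κ), where ℝⁿ carries the Euclidean metric. -/
open MeasureTheory Metric Set
open scoped ENNReal

/-- Each coordinate projection of Euclidean space is `1`-Lipschitz. -/
lemma euclidean_proj_lipschitz (n : ℕ) (i : Fin n) :
    LipschitzWith 1 (fun v : EuclideanSpace ℝ (Fin n) => v i) := by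
  refine LipschitzWith.of_dist_le_mul fun x y => ?_
  rw [NNReal.coe_one, one_mul, EuclideanSpace.dist_eq]
  have h1 : dist (x i) (y i) ^ 2 ≤ ∑ j, dist (x j) (y j) ^ 2 :=
    Finset.single_le_sum (f := fun j => dist (x j) (y j) ^ 2)
      (fun j _ => sq_nonneg _) (Finset.mem_univ i)
  calc dist (x i) (y i) = Real.sqrt (dist (x i) (y i) ^ 2) := (Real.sqrt_sq dist_nonneg).symm
    _ ≤ _ := Real.sqrt_le_sqrt h1

/-- `diam(X →Lip₁ ℝⁿ, m - nκ) ≤ √n · diam(X →Lip₁ ℝ, m - κ)`. -/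
theorem obsDiam_euclidean_le {X : Type*} [MetricSpace X] [CompleteSpace X]
    [TopologicalSpace.SeparableSpace X] [MeasurableSpace X] [BorelSpace X]
    (μ : Measure X) [IsFiniteMeasure μ] (n : ℕ) (κ : ℝ) (hκ : 0 < κ) :
    obsDiam (EuclideanSpace ℝ (Fin n)) μ ((μ Set.univ).toReal - n * κ)
      ≤ ENNReal.ofReal (Real.sqrt n) * obsDiam ℝ μ ((μ Set.univ).toReal - κ) := by
  have hμfin : μ Set.univ ≠ ∞ := measure_ne_top μ _
  set m : ℝ := (μ Set.univ).toReal with hm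
  refine iSup₂_le fun f hf => ?_
  have hfm : Measurable f := hf.continuous.measurable
  have hmapuniv : (μ.map f) Set.univ = μ Set.univ := by
    rw [Measure.map_apply hfm MeasurableSet.univ, Set.preimage_univ]
  rcases Nat.eq_zero_or_pos n with hn | hn
  · subst hn
    have hsub : (Set.univ : Set (EuclideanSpace ℝ (Fin 0))).Subsingleton :=
      fun a _ b _ => PiLp.ext fun i => Fin.elim0 i
    have h0 : partialDiam (μ.map f) (m - (0 : ℕ) * κ) ≤ 0 := by
      refine le_trans ?_ (EMetric.diam_subsingleton hsub).le
      refine iInf_le_of_le Set.univ (iInf_le_of_le MeasurableSet.univ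
        (iInf_le_of_le ?_ le_rfl))
      rw [hmapuniv]
      simp only [Nat.cast_zero, zero_mul, sub_zero, hm, ENNReal.ofReal_toReal hμfin, le_refl]
    exact le_trans h0 (zero_le)
  set D := obsDiam ℝ μ (m - κ) with hD
  have hsn : (0 : ℝ) < Real.sqrt n := Real.sqrt_pos.mpr (by exact_mod_cast hn)
  have hsn0 : ENNReal.ofReal (Real.sqrt n) ≠ 0 := by
    simpa [pos_iff_ne_zero] using ENNReal.ofReal_pos.mpr hsn
  have hsnt : ENNReal.ofReal (Real.sqrt n) ≠ ∞ := ENNReal.ofReal_ne_top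
  by_cases hDtop : D = ∞
  · rw [hDtop, ENNReal.mul_top hsn0]; exact le_top
  refine ENNReal.le_of_forall_pos_le_add fun ε hε _ => ?_
  set δ : ℝ≥0∞ := (ε : ℝ≥0∞) / ENNReal.ofReal (Real.sqrt n) with hδ
  have hδ0 : 0 < δ := ENNReal.div_pos (by exact_mod_cast hε.ne') hsnt
  have hδt : δ ≠ ∞ := (ENNReal.div_lt_top ENNReal.coe_ne_top hsn0).ne
  have hDδt : D + δ ≠ ∞ := ENNReal.add_ne_top.mpr ⟨hDtop, hδt⟩
  -- choose good sets for each coordinate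
  have key : ∀ i : Fin n, ∃ s : Set ℝ, MeasurableSet s ∧
      ENNReal.ofReal (m - κ) ≤ (μ.map f) ((fun v : EuclideanSpace ℝ (Fin n) => v i) ⁻¹' s) ∧
      EMetric.diam s < D + δ := by
    intro i
    have hg : LipschitzWith 1 (fun x => f x i) :=
      by simpa [Function.comp_def] using (euclidean_proj_lipschitz n i).comp hf
    have hgm : Measurable (fun x => f x i) := hg.continuous.measurable
    have hle : partialDiam (μ.map (fun x => f x i)) (m - κ) ≤ D :=
      le_iSup_of_le (fun x => f x i) (le_iSup_of_le hg le_rfl)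
    have hlt : partialDiam (μ.map (fun x => f x i)) (m - κ) < D + δ :=
      lt_of_le_of_lt hle (ENNReal.lt_add_right hDtop hδ0.ne')
    rw [partialDiam] at hlt
    simp only [iInf_lt_iff] at hlt
    obtain ⟨s, hs1, hs2, hs3⟩ := hlt
    refine ⟨s, hs1, ?_, hs3⟩
    rw [Measure.map_apply hfm
      (((euclidean_proj_lipschitz n i).continuous.measurable) hs1)]
    rw [Measure.map_apply hgm hs1] at hs2
    exact hs2
  choose s hs1 hs2 hs3 using key
  set S : Set (EuclideanSpace ℝ (Fin n)) :=
    ⋂ i, (fun v : EuclideanSpace ℝ (Fin n) => v i) ⁻¹' s i with hSdef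
  have hSmeas : MeasurableSet S :=
    MeasurableSet.iInter fun i =>
      ((euclidean_proj_lipschitz n i).continuous.measurable) (hs1 i)
  -- measure estimate
  have hterm : ∀ i : Fin n,
      (μ.map f) ((fun v : EuclideanSpace ℝ (Fin n) => v i) ⁻¹' s i)ᶜ ≤ ENNReal.ofReal κ := by
    intro i
    have hmA : MeasurableSet ((fun v : EuclideanSpace ℝ (Fin n) => v i) ⁻¹' s i) :=
      ((euclidean_proj_lipschitz n i).continuous.measurable) (hs1 i)
    have hne : (μ.map f) ((fun v : EuclideanSpace ℝ (Fin n) => v i) ⁻¹' s i) ≠ ∞ := by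
      refine ne_top_of_le_ne_top hμfin ?_
      rw [← hmapuniv]; exact measure_mono (Set.subset_univ _)
    have := measure_add_measure_compl (μ := μ.map f) hmA
    have hco : (μ.map f) ((fun v : EuclideanSpace ℝ (Fin n) => v i) ⁻¹' s i)ᶜ
        = (μ.map f) Set.univ - (μ.map f) ((fun v : EuclideanSpace ℝ (Fin n) => v i) ⁻¹' s i) := by
      rw [← this, ENNReal.add_sub_cancel_left hne]
    rw [hco, hmapuniv, tsub_le_iff_right]
    calc μ Set.univ = ENNReal.ofReal (κ + (m - κ)) := by
          rw [add_sub_cancel, hm, ENNReal.ofReal_toReal hμfin]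
      _ ≤ ENNReal.ofReal κ + ENNReal.ofReal (m - κ) := ENNReal.ofReal_add_le
      _ ≤ ENNReal.ofReal κ + (μ.map f) ((fun v : EuclideanSpace ℝ (Fin n) => v i) ⁻¹' s i) :=
          add_le_add le_rfl (hs2 i)
  have hScompl : (μ.map f) Sᶜ ≤ ENNReal.ofReal (n * κ) := by
    have hceq : Sᶜ = ⋃ i, ((fun v : EuclideanSpace ℝ (Fin n) => v i) ⁻¹' s i)ᶜ := by
      rw [hSdef, Set.compl_iInter]
    rw [hceq]
    calc (μ.map f) (⋃ i, ((fun v : EuclideanSpace ℝ (Fin n) => v i) ⁻¹' s i)ᶜ)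
        ≤ ∑ i : Fin n, (μ.map f) ((fun v : EuclideanSpace ℝ (Fin n) => v i) ⁻¹' s i)ᶜ :=
          measure_iUnion_fintype_le _ _
      _ ≤ ∑ _i : Fin n, ENNReal.ofReal κ := Finset.sum_le_sum fun i _ => hterm i
      _ = ENNReal.ofReal (n * κ) := by
          rw [Finset.sum_const, Finset.card_univ, Fintype.card_fin, nsmul_eq_mul,
            ENNReal.ofReal_mul (by positivity), ENNReal.ofReal_natCast]
  have hSmeasure : ENNReal.ofReal (m - n * κ) ≤ (μ.map f) S := by
    have h1 : ENNReal.ofReal (m - n * κ) ≤ μ Set.univ - ENNReal.ofReal (n * κ) := by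
      rw [ENNReal.ofReal_sub _ (by positivity), hm, ENNReal.ofReal_toReal hμfin]
    refine le_trans h1 ?_
    rw [tsub_le_iff_right, ← hmapuniv, ← measure_add_measure_compl (μ := μ.map f) hSmeas]
    exact add_le_add le_rfl hScompl
  -- diameter estimate
  have hdS : EMetric.diam S ≤ ENNReal.ofReal (Real.sqrt n) * (D + δ) := by
    set c : ℝ := (D + δ).toReal with hc
    have hc0 : 0 ≤ c := ENNReal.toReal_nonneg
    refine EMetric.diam_le fun x hx y hy => ?_
    have hcoord : ∀ i : Fin n, dist (x i) (y i) ≤ c := by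
      intro i
      have hxi : x i ∈ s i := by
        have := Set.mem_iInter.mp hx i; exact this
      have hyi : y i ∈ s i := by
        have := Set.mem_iInter.mp hy i; exact this
      have hed : edist (x i) (y i) ≤ D + δ :=
        le_trans (EMetric.edist_le_diam_of_mem hxi hyi) (hs3 i).le
      have : dist (x i) (y i) = (edist (x i) (y i)).toReal := by
        rw [edist_dist, ENNReal.toReal_ofReal dist_nonneg]
      rw [this]
      exact ENNReal.toReal_mono hDδt hed
    have hdistxy : dist x y ≤ Real.sqrt n * c := by
      rw [EuclideanSpace.dist_eq]
      calc Real.sqrt (∑ i, dist (x i) (y i) ^ 2)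
          ≤ Real.sqrt (∑ _i : Fin n, c ^ 2) :=
            Real.sqrt_le_sqrt (Finset.sum_le_sum fun i _ =>
              pow_le_pow_left₀ dist_nonneg (hcoord i) 2)
        _ = Real.sqrt ((n : ℝ) * c ^ 2) := by
            rw [Finset.sum_const, Finset.card_univ, Fintype.card_fin, nsmul_eq_mul]
        _ = Real.sqrt n * c := by
            rw [Real.sqrt_mul (Nat.cast_nonneg n), Real.sqrt_sq hc0]
    calc edist x y = ENNReal.ofReal (dist x y) := edist_dist x y
      _ ≤ ENNReal.ofReal (Real.sqrt n * c) := ENNReal.ofReal_le_ofReal hdistxy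
      _ = ENNReal.ofReal (Real.sqrt n) * ENNReal.ofReal c := ENNReal.ofReal_mul hsn.le
      _ = ENNReal.ofReal (Real.sqrt n) * (D + δ) := by
          rw [hc, ENNReal.ofReal_toReal hDδt]
  calc partialDiam (μ.map f) (m - n * κ) ≤ EMetric.diam S :=
        iInf_le_of_le S (iInf_le_of_le hSmeas (iInf_le_of_le hSmeasure le_rfl))
    _ ≤ ENNReal.ofReal (Real.sqrt n) * (D + δ) := hdS
    _ = ENNReal.ofReal (Real.sqrt n) * D + ENNReal.ofReal (Real.sqrt n) * δ := mul_add _ _ _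
    _ = ENNReal.ofReal (Real.sqrt n) * D + ε := by
        rw [hδ, ENNReal.mul_div_cancel hsn0 hsnt]
end
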